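/- arXiv:2112.13886 — 6 statements merged into one kernel-verified Lean document; each statement's English description precedes it below -/
import Mathlib

section
/- If d > 1 divides p-1, then sqrt(((d-1)p+1)/d) ≤ V_1(p) ≤ sqrt((d-1)p + 1), where V_1(p) = Σ_{s=0}^{d-1} |η_s|. -/
/-!
Let `H` be the subgroup of `𝔽_pˣ` generated by `g ^ d`, of order `k`, so that `η_s` is the
additive character `ψ` summed over the coset `g ^ s • H`. Expanding `|η_s|²` and substituting
`h' = h t` gives `∑_{h, t ∈ H} ψ (g ^ s h (1 - t))`; as the cosets tile `𝔽_pˣ`, summing over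
`s` produces the complete sums `∑_{u ∈ 𝔽_pˣ} ψ (u (1 - t))`, which are `p - 1` for `t = 1`
and `-1` otherwise. Hence `∑ |η_s|² = p - k`, and both bounds are Cauchy–Schwarz,
`∑ |η_s|² ≤ (∑ |η_s|)² ≤ d ∑ |η_s|²`, because `d (p - k) = (d - 1) p + 1`.
-/

open Finset Subgroup Function

theorem Fintype.sum_units_eq_sum_sub_zero {G₀ M : Type*} [GroupWithZero G₀] [Fintype G₀]
    [DecidableEq G₀] [AddCommGroup M] (f : G₀ → M) :
    ∑ u : G₀ˣ, f u = ∑ x, f x - f 0 := by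
  rw [Fintype.sum_eq_add_sum_subtype_ne f 0, add_sub_cancel_left]
  exact Fintype.sum_equiv unitsEquivNeZero _ _ fun _ => rfl

theorem IsOfFinOrder.sum_range_orderOf_pow {G M : Type*} [Group G] [AddCommMonoid M] {x : G}
    [Fintype (zpowers x)] (hx : IsOfFinOrder x) (f : G → M) :
    ∑ n ∈ range (orderOf x), f (x ^ n) = ∑ y : zpowers x, f y := by
  rw [sum_range]
  exact Fintype.sum_equiv (finEquivZPowers hx) _ _ fun _ => rfl

theorem bijective_pow_mul_zpowers_pow {G : Type*} [Group G] [Finite G] {g : G}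
    (hg : ∀ x, x ∈ zpowers g) {d : ℕ} (hd : d ∣ Nat.card G) :
    Bijective fun q : Fin d × zpowers (g ^ d) => g ^ (q.1 : ℕ) * q.2 := by
  have hd0 : 0 < d := Nat.pos_of_dvd_of_pos hd Nat.card_pos
  rw [Nat.bijective_iff_surjective_and_card]
  constructor
  · intro x
    obtain ⟨n, rfl⟩ := (isOfFinOrder_of_finite g).mem_powers_iff_mem_zpowers.2 (hg x)
    refine ⟨(⟨n % d, Nat.mod_lt n hd0⟩, ⟨(g ^ d) ^ (n / d), npow_mem_zpowers _ _⟩), ?_⟩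
    show g ^ (n % d) * (g ^ d) ^ (n / d) = g ^ n
    rw [← pow_mul, ← pow_add, Nat.mod_add_div]
  · rw [Nat.card_prod, Nat.card_fin, Nat.card_zpowers, orderOf_pow_of_dvd hd0.ne',
      orderOf_eq_card_of_forall_mem_zpowers hg, Nat.mul_div_cancel' hd]
    rwa [orderOf_eq_card_of_forall_mem_zpowers hg]

theorem Finset.sqrt_sum_sq_le_sum {ι : Type*} (s : Finset ι) {a : ι → ℝ}
    (ha : ∀ i ∈ s, 0 ≤ a i) : √(∑ i ∈ s, a i ^ 2) ≤ ∑ i ∈ s, a i :=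
  Real.sqrt_le_iff.2 ⟨sum_nonneg ha, sum_sq_le_sq_sum_of_nonneg ha⟩

theorem Finset.sum_le_sqrt_card_mul_sum_sq {ι : Type*} (s : Finset ι) (a : ι → ℝ) :
    ∑ i ∈ s, a i ≤ √(#s * ∑ i ∈ s, a i ^ 2) :=
  Real.le_sqrt_of_sq_le sq_sum_le_card_mul_sum_sq

namespace AddChar

theorem sum_units_mul {F R : Type*} [Field F] [Fintype F] [DecidableEq F]
    [CommRing R] [IsDomain R] {ψ : AddChar F R} (hψ : ψ.IsPrimitive) (c : F) :
    ∑ u : Fˣ, ψ (u * c) = (if c = 0 then (Fintype.card F : R) else 0) - 1 := by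
  rw [Fintype.sum_units_eq_sum_sub_zero (fun x => ψ (x * c)), sum_mulShift c hψ,
    zero_mul, map_zero_eq_one, Nat.cast_ite, Nat.cast_zero]

noncomputable def gaussPeriod {R : Type*} [CommRing R] (ψ : AddChar R ℂ) (H : Subgroup Rˣ)
    [Fintype H] (x : R) : ℂ :=
  ∑ h : H, ψ (x * (h : Rˣ))

theorem norm_sq_gaussPeriod {R : Type*} [CommRing R] [Finite R] (ψ : AddChar R ℂ)
    (H : Subgroup Rˣ) [Fintype H] (x : R) :
    (‖ψ.gaussPeriod H x‖ : ℂ) ^ 2 =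
      ∑ h : H, ∑ t : H, ψ (x * (h : Rˣ) * (1 - (t : Rˣ))) := by
  rw [gaussPeriod, ← Complex.mul_conj', map_sum, sum_mul_sum]
  refine sum_congr rfl fun h _ => ?_
  refine (Fintype.sum_equiv (Equiv.mulLeft h) _ _ fun t => ?_).symm
  rw [← map_neg_eq_conj, ← map_add_eq_mul, Equiv.coe_mulLeft, Subgroup.coe_mul, Units.val_mul]
  congr 1
  ring

theorem sum_norm_sq_gaussPeriod {F : Type*} [Field F] [Fintype F] {ψ : AddChar F ℂ}
    (hψ : ψ.IsPrimitive) (H : Subgroup Fˣ) [Fintype H] {ι : Type*} [Fintype ι] (r : ι → Fˣ)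
    (hr : Bijective fun q : ι × H => r q.1 * q.2) :
    ∑ i, ‖ψ.gaussPeriod H (r i)‖ ^ 2 = (Fintype.card F : ℝ) - Fintype.card H := by
  classical
  apply Complex.ofReal_injective
  push_cast
  calc ∑ i, (‖ψ.gaussPeriod H (r i)‖ : ℂ) ^ 2
      = ∑ t : H, ∑ q : ι × H, ψ ((r q.1 * q.2 : Fˣ) * (1 - (t : Fˣ))) := by
        simp_rw [norm_sq_gaussPeriod, Fintype.sum_prod_type, Units.val_mul]
        exact (sum_congr rfl fun _ _ => sum_comm).trans sum_comm
    _ = ∑ t : H, ((if 1 - ((t : Fˣ) : F) = 0 then (Fintype.card F : ℂ) else 0) - 1) := by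
        refine sum_congr rfl fun t _ => ?_
        rw [Fintype.sum_bijective _ hr _ (fun u : Fˣ => ψ (u * (1 - (t : Fˣ)))) fun _ => rfl,
          sum_units_mul hψ]
    _ = Fintype.card F - Fintype.card H := by
        simp_rw [sub_eq_zero, eq_comm (a := (1 : F)), Units.val_eq_one, OneMemClass.coe_eq_one]
        rw [sum_sub_distrib, Fintype.sum_ite_eq']
        simp

end AddChar

theorem gaussian_periods_V1_bounds_general (p d k : ℕ) (hp : p.Prime)
    (hd : 1 < d) (hdk : p - 1 = d * k)
    (g : (ZMod p)ˣ) (hg : ∀ x : (ZMod p)ˣ, x ∈ Subgroup.zpowers g)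
    (η : ℕ → ℂ)
    (hη : ∀ a : ℕ, η a = ∑ j ∈ Finset.range k,
      Complex.exp (2 * (Real.pi : ℂ) * Complex.I *
        (((g ^ (d * j + a) : (ZMod p)ˣ) : ZMod p).val : ℂ) / (p : ℂ))) :
    Real.sqrt (((d - 1 : ℝ) * p + 1) / d) ≤ ∑ s ∈ Finset.range d, ‖η s‖ ∧
    ∑ s ∈ Finset.range d, ‖η s‖ ≤ Real.sqrt ((d - 1 : ℝ) * p + 1) := by
  have := Fact.mk hp
  have hcard : Nat.card (ZMod p)ˣ = d * k := by
    rw [Nat.card_eq_fintype_card, ZMod.card_units, hdk]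
  have hk : orderOf (g ^ d) = k := by
    have horder : orderOf g = d * k := (orderOf_eq_card_of_forall_mem_zpowers hg).trans hcard
    rw [orderOf_pow_of_dvd (by omega) (horder ▸ dvd_mul_right d k), horder,
      Nat.mul_div_cancel_left k (by omega)]
  have hperiod (s : ℕ) :
      η s = ZMod.stdAddChar.gaussPeriod (zpowers (g ^ d)) (g ^ s : (ZMod p)ˣ) := by
    rw [hη, AddChar.gaussPeriod, ← hk, ← (isOfFinOrder_of_finite _).sum_range_orderOf_pow
      (fun h : (ZMod p)ˣ => ZMod.stdAddChar (((g ^ s : (ZMod p)ˣ) : ZMod p) * (h : ZMod p)))]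
    refine sum_congr rfl fun j _ => ?_
    rw [ZMod.stdAddChar_apply, ZMod.toCircle_apply, ← Units.val_mul, ← pow_mul, ← pow_add,
      add_comm]
  have hsq : ∑ s ∈ range d, ‖η s‖ ^ 2 = (p : ℝ) - k := by
    rw [sum_range (fun s => ‖η s‖ ^ 2)]
    simp_rw [hperiod]
    rw [AddChar.sum_norm_sq_gaussPeriod (ZMod.isPrimitive_stdAddChar p) _
      (fun s : Fin d => g ^ (s : ℕ)) (bijective_pow_mul_zpowers_pow hg (hcard ▸ dvd_mul_right d k)),
      ZMod.card, Fintype.card_zpowers, hk]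
  have hp' : (p : ℝ) = d * k + 1 := by
    exact_mod_cast (by have := hp.two_le; omega : p = d * k + 1)
  have hbound : (d - 1 : ℝ) * p + 1 = d * ((p : ℝ) - k) := by rw [hp']; ring
  constructor
  · rw [hbound, mul_div_cancel_left₀ _ (by positivity), ← hsq]
    exact sqrt_sum_sq_le_sum _ fun _ _ => norm_nonneg _
  · rw [hbound, ← hsq]
    simpa using sum_le_sqrt_card_mul_sum_sq (range d) fun s => ‖η s‖

/-- If `d > 1` divides `p-1`, then `√(((d-1)p+1)/d) ≤ V_1(p) ≤ √((d-1)p + 1)`,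
where `V_1(p) = ∑_{s=0}^{d-1} |η_s|`. -/
theorem gaussian_periods_V1_bounds (p d k : ℕ) (hp : p.Prime) (hodd : Odd p)
    (hd : 1 < d) (hdk : p - 1 = d * k)
    (g : (ZMod p)ˣ) (hg : ∀ x : (ZMod p)ˣ, x ∈ Subgroup.zpowers g)
    (η : ℕ → ℂ)
    (hη : ∀ a : ℕ, η a = ∑ j ∈ Finset.range k,
      Complex.exp (2 * (Real.pi : ℂ) * Complex.I *
        (((g ^ (d * j + a) : (ZMod p)ˣ) : ZMod p).val : ℂ) / (p : ℂ))) :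
    Real.sqrt (((d - 1 : ℝ) * p + 1) / d) ≤ ∑ s ∈ Finset.range d, ‖η s‖ ∧
    ∑ s ∈ Finset.range d, ‖η s‖ ≤ Real.sqrt ((d - 1 : ℝ) * p + 1) :=
  gaussian_periods_V1_bounds_general p d k hp hd hdk g hg η hη
end

section
/- If 2d divides p-1, then for all 0 ≤ m, n ≤ d-1, c_{0,m,n} = c_{0,n,m}; that is, the number of solutions (a,b) ∈ Γ² to a + g^m b = g^n equals the number of solutions to a + g^n b = g^m. -/
/-! When `-1 ∈ Γ`, the map `(a, b) ↦ (-a b⁻¹, b⁻¹)` sends solutions of `a + x b = y` in `Γ × Γ` to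
solutions of `a + y b = x`, and it is an involution. That `-1 ∈ Γ = ⟨g^d⟩` follows from
`2d ∣ p - 1`: writing `-1 = g^j`, `(-1)^2 = 1` gives `p - 1 ∣ 2j`, hence `d ∣ j`. -/

open Subgroup

theorem mem_zpowers_pow_of_sq_eq_one {G : Type*} [Group G] {g x : G} {d : ℕ}
    (hx : x ∈ zpowers g) (hx2 : x ^ 2 = 1) (hd : 2 * d ∣ orderOf g) :
    x ∈ zpowers (g ^ d) := by
  obtain ⟨j, rfl⟩ := mem_zpowers_iff.mp hx
  have horder : (orderOf g : ℤ) ∣ 2 * j := by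
    rw [orderOf_dvd_iff_zpow_eq_one, mul_comm, zpow_mul]
    exact_mod_cast hx2
  obtain ⟨i, rfl⟩ : (d : ℤ) ∣ j :=
    (mul_dvd_mul_iff_left two_ne_zero).mp ((Int.natCast_dvd_natCast.mpr hd).trans horder)
  exact ⟨i, by rw [zpow_mul, zpow_natCast]⟩

section UnitEquation

variable {R : Type*} [CommRing R]

abbrev UnitEquationSolutions (H : Subgroup Rˣ) (x y : R) : Type _ :=
  {ab : Rˣ × Rˣ // ab.1 ∈ H ∧ ab.2 ∈ H ∧ (ab.1 : R) + x * ab.2 = y}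

theorem neg_mul_inv_add_mul_inv_eq_of_add_mul_eq {a b : Rˣ} {x y : R}
    (h : (a : R) + x * b = y) :
    ((-a * b⁻¹ : Rˣ) : R) + y * (b⁻¹ : Rˣ) = x := by
  rw [← h, Units.val_mul, Units.val_neg]
  linear_combination x * b.mul_inv

namespace UnitEquationSolutions

variable {H : Subgroup Rˣ} {x y : R}

def swap (hneg : -1 ∈ H) (s : UnitEquationSolutions H x y) : UnitEquationSolutions H y x :=
  ⟨(-s.1.1 * s.1.2⁻¹, s.1.2⁻¹),
    by simpa only [neg_mul, one_mul] using H.mul_mem (H.mul_mem hneg s.2.1) (H.inv_mem s.2.2.1),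
    H.inv_mem s.2.2.1, neg_mul_inv_add_mul_inv_eq_of_add_mul_eq s.2.2.2⟩

theorem swap_swap (hneg : -1 ∈ H) (s : UnitEquationSolutions H x y) :
    swap hneg (swap hneg s) = s :=
  Subtype.ext <| Prod.ext (by simp [swap, mul_assoc]) (by simp [swap])

def swapEquiv (hneg : -1 ∈ H) : UnitEquationSolutions H x y ≃ UnitEquationSolutions H y x where
  toFun := swap hneg
  invFun := swap hneg
  left_inv := swap_swap hneg
  right_inv := swap_swap hneg

end UnitEquationSolutions

end UnitEquation

theorem c_symmetric_of_two_d_dvd_general (p d : ℕ) (hp : p.Prime) (h2d : 2 * d ∣ p - 1)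
    (g : (ZMod p)ˣ) (hg : ∀ x : (ZMod p)ˣ, x ∈ Subgroup.zpowers g)
    (c : ℕ → ℕ → ℕ)
    (hc : ∀ m n : ℕ, c m n =
      Nat.card {ab : (ZMod p)ˣ × (ZMod p)ˣ //
        ab.1 ∈ Subgroup.zpowers (g ^ d) ∧ ab.2 ∈ Subgroup.zpowers (g ^ d) ∧
        (ab.1 : ZMod p) + ((g ^ m : (ZMod p)ˣ) : ZMod p) * (ab.2 : ZMod p)
          = ((g ^ n : (ZMod p)ˣ) : ZMod p)}) :
    ∀ m n : ℕ, m < d → n < d → c m n = c n m := by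
  have : Fact p.Prime := ⟨hp⟩
  have horder : orderOf g = p - 1 := by
    rw [orderOf_eq_card_of_forall_mem_zpowers hg, Nat.card_eq_fintype_card, ZMod.card_units]
  have hneg : (-1 : (ZMod p)ˣ) ∈ zpowers (g ^ d) :=
    mem_zpowers_pow_of_sq_eq_one (hg _) neg_one_sq (horder ▸ h2d)
  intro m n _ _
  rw [hc m n, hc n m]
  exact Nat.card_congr (UnitEquationSolutions.swapEquiv hneg)

/-- If `2d ∣ p - 1`, then `c_{0,m,n} = c_{0,n,m}` for all `0 ≤ m, n ≤ d-1`. -/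
theorem c_symmetric_of_two_d_dvd (p d : ℕ) (hp : p.Prime) (hodd : Odd p)
    (hd : 0 < d) (h2d : 2 * d ∣ p - 1)
    (g : (ZMod p)ˣ) (hg : ∀ x : (ZMod p)ˣ, x ∈ Subgroup.zpowers g)
    (c : ℕ → ℕ → ℕ)
    (hc : ∀ m n : ℕ, c m n =
      Nat.card {ab : (ZMod p)ˣ × (ZMod p)ˣ //
        ab.1 ∈ Subgroup.zpowers (g ^ d) ∧ ab.2 ∈ Subgroup.zpowers (g ^ d) ∧
        (ab.1 : ZMod p) + ((g ^ m : (ZMod p)ˣ) : ZMod p) * (ab.2 : ZMod p)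
          = ((g ^ n : (ZMod p)ˣ) : ZMod p)}) :
    ∀ m n : ℕ, m < d → n < d → c m n = c n m :=
  c_symmetric_of_two_d_dvd_general p d hp h2d g hg c hc
end

section
/- The number M_{i,j,k} of projective F_p-rational points on the curve g^i x^d + g^j y^d = g^k z^d in P²(F_p) satisfies M_{i,j,k} = d² c_{i,j,k} + d(δ_{j,k} + δ_{i,k} + δ_*), where δ_* = 1 if (p-1)/2 ≡ i - j (mod d) and δ_* = 0 otherwise. -/
/-!
Over a finite field `K` with `q` elements, the `(q - 1) M` nonzero points of the cone
`a x^d + b y^d = c z^d` split into those with `z ≠ 0`, which are `q - 1` times the affine points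
of `a x^d + b y^d = c`, and those with `z = 0`, which are `q - 1` times the roots of
`a t^d = -b`. As `g` generates `Kˣ` and `d ∣ q - 1`, the map `x ↦ x^d` is `d`-to-one from `Kˣ`
onto `Γ`. Hence the affine points with `x y ≠ 0` number `d² c`, those with `x = 0` or `y = 0`
number `d δ_{jk}` and `d δ_{ik}`, and the roots of `a t^d = -b` number `d δ_*`, because
`-1 = g^((q-1)/2)`.
-/

open Subgroup
open scoped LinearAlgebra.Projectivization

theorem Nat.card_subtype_and_add_card_subtype_and_not {α : Type*} [Finite α] (P Q : α → Prop) :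
    Nat.card {x // P x ∧ Q x} + Nat.card {x // P x ∧ ¬Q x} = Nat.card {x // P x} := by
  classical
  rw [← Nat.card_sum]
  exact Nat.card_congr <| (Equiv.sumCongr (Equiv.subtypeSubtypeEquivSubtypeInter P Q)
    (Equiv.subtypeSubtypeEquivSubtypeInter P (¬Q ·))).symm.trans
    (Equiv.sumCompl fun x : {x // P x} => Q x)

theorem natCard_subtype_eq_natCard_units {G₀ : Type*} [GroupWithZero G₀] {P : G₀ → Prop}
    (h0 : ¬P 0) : Nat.card {x : G₀ // P x} = Nat.card {u : G₀ˣ // P u} :=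
  Nat.card_congr
    { toFun := fun x => ⟨Units.mk0 x.1 fun h => h0 (h ▸ x.2), x.2⟩
      invFun := fun u => ⟨u.1, u.2⟩
      left_inv := fun x => rfl
      right_inv := fun u => by ext; rfl }

theorem MonoidHom.natCard_preimage {G H : Type*} [Group G] [Group H] [Finite G] (f : G →* H)
    (s : Set H) :
    Nat.card (f ⁻¹' s) = Nat.card ↥(s ∩ Set.range f) * Nat.card f.ker := by
  classical
  have : Fintype ↥(s ∩ Set.range f) := Fintype.ofFinite _
  have hfiber (y : ↥(s ∩ Set.range f)) : Nat.card {x // f x = y} = Nat.card f.ker := by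
    obtain ⟨a, ha⟩ := y.2.2
    rw [← ha]
    exact Nat.card_congr (f.fiberEquivKer a)
  calc Nat.card (f ⁻¹' s) = Nat.card (Σ y : ↥(s ∩ Set.range f), {x // f x = y}) :=
        Nat.card_congr (Equiv.sigmaSubtypeFiberEquivSubtype f
          fun x => (and_iff_left (Set.mem_range_self x)).symm).symm
    _ = _ := by
      rw [Nat.card_sigma, Finset.sum_congr rfl fun y _ => hfiber y, Finset.sum_const,
        Finset.card_univ, smul_eq_mul, ← Nat.card_eq_fintype_card]

theorem Projectivization.natCard_subtype_rep_mul_natCard_units {K V : Type*} [DivisionRing K]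
    [AddCommGroup V] [Module K V] {S : V → Prop}
    (hS : ∀ (t : Kˣ) (v : V), S (t • v) ↔ S v) :
    Nat.card {P : ℙ K V // S P.rep} * Nat.card Kˣ = Nat.card {v : V // v ≠ 0 ∧ S v} := by
  have hrep (v : {v : V // v ≠ 0}) : S v ↔ S (mk K v.1 v.2).rep := by
    obtain ⟨t, ht⟩ := exists_smul_eq_mk_rep K v.1 v.2
    rw [← ht, hS]
  calc Nat.card {P : ℙ K V // S P.rep} * Nat.card Kˣ
      = Nat.card {q : ℙ K V × Kˣ // S q.1.rep} := by
        rw [← Nat.card_prod]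
        exact Nat.card_congr Equiv.prodSubtypeFstEquivSubtypeProd.symm
    _ = Nat.card {v : {v : V // v ≠ 0} // S v} :=
        Nat.card_congr (Equiv.subtypeEquiv (nonZeroEquivProjectivizationProdUnits K V) hrep).symm
    _ = Nat.card {v : V // v ≠ 0 ∧ S v} :=
        Nat.card_congr (Equiv.subtypeSubtypeEquivSubtypeInter _ _)

theorem zpow_mem_zpowers_pow_iff {G : Type*} [Group G] {g : G} {d : ℕ} (hd : d ∣ orderOf g)
    {m : ℤ} :
    g ^ m ∈ zpowers (g ^ d) ↔ (d : ℤ) ∣ m := by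
  constructor
  · intro h
    obtain ⟨n, hn⟩ := mem_zpowers_iff.mp h
    have h : (orderOf g : ℤ) ∣ d * n - m := by
      rw [orderOf_dvd_iff_zpow_eq_one, zpow_sub, zpow_mul, zpow_natCast, hn, mul_inv_cancel]
    simpa using dvd_sub (dvd_mul_right (d : ℤ) n) ((Int.natCast_dvd_natCast.mpr hd).trans h)
  · rintro ⟨n, rfl⟩
    exact ⟨n, by simp [zpow_mul]⟩

theorem inv_pow_mul_pow_mem_zpowers_pow_iff {G : Type*} [Group G] {g : G} {d j k : ℕ}
    (hd : d ∣ orderOf g) (hj : j < d) (hk : k < d) :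
    (g ^ j)⁻¹ * g ^ k ∈ zpowers (g ^ d) ↔ j = k := by
  have h : (g ^ j)⁻¹ * g ^ k = g ^ (-(j : ℤ) + k) := by
    rw [zpow_add, zpow_neg, zpow_natCast, zpow_natCast]
  rw [h, zpow_mem_zpowers_pow_iff hd]
  refine ⟨fun h => ?_, fun h => by simp [h]⟩
  have := Int.eq_zero_of_dvd_of_natAbs_lt_natAbs h (by omega)
  omega

section CyclicGroup

variable {G : Type*} [CommGroup G] {g : G}

theorem range_powMonoidHom_eq_zpowers_pow (hg : ∀ x, x ∈ zpowers g) (d : ℕ) :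
    (powMonoidHom d : G →* G).range = zpowers (g ^ d) := by
  rw [MonoidHom.range_eq_map, ← (eq_top_iff' _).mpr hg, MonoidHom.map_zpowers, powMonoidHom_apply]

variable [Finite G]

theorem natCard_ker_powMonoidHom (hg : ∀ x, x ∈ zpowers g) {d : ℕ} (hd : d ∣ Nat.card G) :
    Nat.card (powMonoidHom d : G →* G).ker = d := by
  have : IsCyclic G := ⟨g, hg⟩
  rw [IsCyclic.card_powMonoidHom_ker, Nat.gcd_eq_right hd]

theorem natCard_subtype_pow (hg : ∀ x, x ∈ zpowers g) {d : ℕ} (hd : d ∣ Nat.card G)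
    (P : G → Prop) :
    Nat.card {x : G // P (x ^ d)} = d * Nat.card {u : G // u ∈ zpowers (g ^ d) ∧ P u} := by
  have h := (powMonoidHom d : G →* G).natCard_preimage {u | P u}
  rw [natCard_ker_powMonoidHom hg hd, ← MonoidHom.coe_range,
    range_powMonoidHom_eq_zpowers_pow hg, mul_comm] at h
  exact h.trans (congrArg _ (Nat.card_congr (Equiv.subtypeEquivRight fun _ => and_comm)))

theorem natCard_subtype_pow_prod (hg : ∀ x, x ∈ zpowers g) {d : ℕ} (hd : d ∣ Nat.card G)
    (P : G × G → Prop) :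
    Nat.card {xy : G × G // P (xy.1 ^ d, xy.2 ^ d)} =
      d ^ 2 *
        Nat.card {u : G × G // u.1 ∈ zpowers (g ^ d) ∧ u.2 ∈ zpowers (g ^ d) ∧ P u} := by
  let f := (powMonoidHom d : G →* G).prodMap (powMonoidHom d : G →* G)
  have hker : Nat.card f.ker = d ^ 2 := by
    rw [MonoidHom.ker_prodMap, Nat.card_congr (prodEquiv _ _).toEquiv, Nat.card_prod,
      natCard_ker_powMonoidHom hg hd, sq]
  have h := f.natCard_preimage {uw | P uw}
  rw [hker, ← MonoidHom.coe_range, MonoidHom.range_prodMap,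
    range_powMonoidHom_eq_zpowers_pow hg, mul_comm] at h
  exact h.trans (congrArg _ (Nat.card_congr (Equiv.subtypeEquivRight fun _ => by
    simp only [Set.mem_inter_iff, Set.mem_ofPred_eq, SetLike.mem_coe, mem_prod]; tauto)))

theorem natCard_mul_pow_eq (hg : ∀ x, x ∈ zpowers g) {d : ℕ} (hd : d ∣ Nat.card G)
    (a c : G) :
    Nat.card {x : G // a * x ^ d = c} = if a⁻¹ * c ∈ zpowers (g ^ d) then d else 0 := by
  rw [natCard_subtype_pow hg hd (a * · = c)]
  simp_rw [← eq_inv_mul_iff_mul_eq]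
  split_ifs with h
  · rw [Nat.card_eq_one_iff_exists.mpr ⟨⟨_, h, rfl⟩, fun u => Subtype.ext u.2.2⟩, mul_one]
  · have : IsEmpty {u // u ∈ zpowers (g ^ d) ∧ u = a⁻¹ * c} :=
      ⟨fun u => h (u.2.2 ▸ u.2.1)⟩
    rw [Nat.card_of_isEmpty, mul_zero]

end CyclicGroup

theorem Units.pow_orderOf_div_two_eq_neg_one {R : Type*} [CommRing R] [NoZeroDivisors R]
    {ζ : Rˣ} (h0 : orderOf ζ ≠ 0) (h2 : Even (orderOf ζ)) : ζ ^ (orderOf ζ / 2) = -1 := by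
  have h : IsPrimitiveRoot (ζ ^ (orderOf ζ / 2)) 2 :=
    (IsPrimitiveRoot.orderOf ζ).pow (Nat.pos_of_ne_zero h0) (Nat.div_two_mul_two_of_even h2).symm
  exact Units.ext (by simpa using (IsPrimitiveRoot.coe_units_iff.mpr h).eq_neg_one_of_two_right)

theorem Units.inv_pow_mul_neg_pow_mem_zpowers_pow_iff {R : Type*} [CommRing R]
    [NoZeroDivisors R] {g : Rˣ} {d : ℕ} (hd : d ∣ orderOf g) (h0 : orderOf g ≠ 0)
    (h2 : Even (orderOf g)) (i j : ℕ) :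
    (g ^ i)⁻¹ * -(g ^ j) ∈ zpowers (g ^ d) ↔
      ((orderOf g / 2 : ℕ) : ℤ) ≡ (i : ℤ) - (j : ℤ) [ZMOD (d : ℤ)] := by
  have h : (g ^ i)⁻¹ * -(g ^ j) = g ^ (-(i : ℤ) + ((orderOf g / 2 + j : ℕ) : ℤ)) := by
    rw [zpow_add, zpow_neg, zpow_natCast, zpow_natCast, pow_add,
      pow_orderOf_div_two_eq_neg_one h0 h2, neg_one_mul]
  rw [h, zpow_mem_zpowers_pow_iff hd, Int.modEq_iff_dvd, ← dvd_neg]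
  push_cast
  ring_nf

section FiniteField

variable {K : Type*} [Field K] [Finite K] {g : Kˣ}

theorem natCard_mul_pow_eq_val (hg : ∀ x, x ∈ zpowers g) {d : ℕ} (hd : d ∣ Nat.card Kˣ)
    (a c : Kˣ) :
    Nat.card {x : K // (a : K) * x ^ d = c} = if a⁻¹ * c ∈ zpowers (g ^ d) then d else 0 := by
  have hd0 : d ≠ 0 := ne_zero_of_dvd_ne_zero Nat.card_pos.ne' hd
  rw [natCard_subtype_eq_natCard_units (by simp [zero_pow hd0, c.ne_zero.symm]),
    ← natCard_mul_pow_eq hg hd]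
  exact Nat.card_congr (Equiv.subtypeEquivRight fun u => by simp [Units.ext_iff])

theorem natCard_diagonal_units (hg : ∀ x, x ∈ zpowers g) {d : ℕ} (hd : d ∣ Nat.card Kˣ)
    (a b c : K) :
    Nat.card {xy : Kˣ × Kˣ // a * (xy.1 : K) ^ d + b * (xy.2 : K) ^ d = c} =
      d ^ 2 * Nat.card {uw : Kˣ × Kˣ // uw.1 ∈ zpowers (g ^ d) ∧ uw.2 ∈ zpowers (g ^ d) ∧
        a * (uw.1 : K) + b * (uw.2 : K) = c} := by
  simpa only [Units.val_pow_eq_pow_val] using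
    natCard_subtype_pow_prod hg hd fun uw : Kˣ × Kˣ => a * (uw.1 : K) + b * uw.2 = c

end FiniteField

section FermatCurve

variable {K : Type*} [Field K]

def IsOnFermatCurve (a b c : K) (d : ℕ) (v : Fin 3 → K) : Prop :=
  a * v 0 ^ d + b * v 1 ^ d = c * v 2 ^ d

theorem isOnFermatCurve_smul_iff {a b c t : K} {d : ℕ} (ht : t ≠ 0) (v : Fin 3 → K) :
    IsOnFermatCurve a b c d (t • v) ↔ IsOnFermatCurve a b c d v := by
  simp only [IsOnFermatCurve, Pi.smul_apply, smul_eq_mul, mul_pow]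
  refine ⟨fun h => mul_left_cancel₀ (pow_ne_zero d ht) ?_, fun h => ?_⟩
  · linear_combination h
  · linear_combination (t ^ d) * h

theorem natCard_isOnFermatCurve_and_ne_zero (a b c : K) (d : ℕ) :
    Nat.card {v : Fin 3 → K // (v ≠ 0 ∧ IsOnFermatCurve a b c d v) ∧ ¬v 2 = 0} =
      Nat.card Kˣ * Nat.card {xy : K × K // a * xy.1 ^ d + b * xy.2 ^ d = c} := by
  rw [← Nat.card_prod]
  symm
  exact Nat.card_congr
    { toFun := fun w => ⟨(w.1 : K) • ![w.2.1.1, w.2.1.2, 1], by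
        refine ⟨⟨fun h => ?_, (isOnFermatCurve_smul_iff w.1.ne_zero _).mpr ?_⟩, ?_⟩
        · simpa using congrFun h 2
        · simpa [IsOnFermatCurve] using w.2.2
        · simp⟩
      invFun := fun v => (Units.mk0 (v.1 2) v.2.2, ⟨(v.1 0 / v.1 2, v.1 1 / v.1 2), by
        rw [div_pow, div_pow, mul_div_assoc', mul_div_assoc', ← add_div, v.2.1.2,
          mul_div_cancel_right₀ _ (pow_ne_zero d v.2.2)]⟩)
      left_inv := fun w => by
        ext <;> simp [mul_div_cancel_left₀ _ w.1.ne_zero]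
      right_inv := fun v => by
        ext m
        fin_cases m <;> simp [mul_div_cancel₀ _ v.2.2] }

theorem natCard_isOnFermatCurve_and_eq_zero {a : K} (ha : a ≠ 0) (b c : K) {d : ℕ}
    (hd : d ≠ 0) :
    Nat.card {v : Fin 3 → K // (v ≠ 0 ∧ IsOnFermatCurve a b c d v) ∧ v 2 = 0} =
      Nat.card Kˣ * Nat.card {t : K // a * t ^ d = -b} := by
  have hv1 (v : {v : Fin 3 → K // (v ≠ 0 ∧ IsOnFermatCurve a b c d v) ∧ v 2 = 0}) :
      v.1 1 ≠ 0 := by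
    obtain ⟨v, ⟨hv, hE⟩, hv2⟩ := v
    intro (hv1 : v 1 = 0)
    have hv0 : v 0 = 0 := by
      simpa [IsOnFermatCurve, hv1, hv2, zero_pow hd, ha, hd] using hE
    exact hv (by ext m; fin_cases m <;> assumption)
  rw [← Nat.card_prod]
  symm
  exact Nat.card_congr
    { toFun := fun w => ⟨(w.1 : K) • ![w.2.1, 1, 0], by
        refine ⟨⟨fun h => ?_, (isOnFermatCurve_smul_iff w.1.ne_zero _).mpr ?_⟩, ?_⟩
        · simpa using congrFun h 1
        · simp [IsOnFermatCurve, zero_pow hd, w.2.2]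
        · simp⟩
      invFun := fun v => (Units.mk0 (v.1 1) (hv1 v), ⟨v.1 0 / v.1 1, by
        have h := v.2.1.2
        simp only [IsOnFermatCurve, v.2.2, zero_pow hd, mul_zero] at h
        rw [div_pow, mul_div_assoc', div_eq_iff (pow_ne_zero d (hv1 v))]
        linear_combination h⟩)
      left_inv := fun w => by
        ext <;> simp [mul_div_cancel_left₀ _ w.1.ne_zero]
      right_inv := fun v => by
        ext m
        fin_cases m <;> simp [mul_div_cancel₀ _ (hv1 v), v.2.2] }

variable [Finite K]

theorem natCard_diagonal_eq_add (a b : K) {c : K} (hc : c ≠ 0) {d : ℕ} (hd : d ≠ 0) :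
    Nat.card {xy : K × K // a * xy.1 ^ d + b * xy.2 ^ d = c} =
      Nat.card {y : K // b * y ^ d = c} + Nat.card {x : K // a * x ^ d = c} +
        Nat.card {xy : Kˣ × Kˣ // a * (xy.1 : K) ^ d + b * (xy.2 : K) ^ d = c} := by
  have hx0 {x : K} (h : a * x ^ d = c) : x ≠ 0 := by
    rintro rfl
    simp [zero_pow hd, hc.symm] at h
  rw [← Nat.card_subtype_and_add_card_subtype_and_not _ (fun xy : K × K => xy.1 = 0),
    ← Nat.card_subtype_and_add_card_subtype_and_not
      (fun xy : K × K => a * xy.1 ^ d + b * xy.2 ^ d = c ∧ ¬xy.1 = 0) (fun xy => xy.2 = 0),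
    add_assoc]
  congr 1
  · exact Nat.card_congr
      { toFun := fun xy => ⟨xy.1.2, by simpa [xy.2.2, zero_pow hd] using xy.2.1⟩
        invFun := fun y => ⟨(0, y), by simpa [zero_pow hd] using y.2, rfl⟩
        left_inv := fun xy => by ext; exacts [xy.2.2.symm, rfl]
        right_inv := fun y => rfl }
  congr 1
  · exact Nat.card_congr
      { toFun := fun xy => ⟨xy.1.1, by simpa [xy.2.2, zero_pow hd] using xy.2.1.1⟩
        invFun := fun x => ⟨(x, 0), ⟨by simpa [zero_pow hd] using x.2, hx0 x.2⟩, rfl⟩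
        left_inv := fun xy => by ext; exacts [rfl, xy.2.2.symm]
        right_inv := fun x => rfl }
  · exact Nat.card_congr
      { toFun := fun xy => ⟨(Units.mk0 _ xy.2.1.2, Units.mk0 _ xy.2.2), xy.2.1.1⟩
        invFun := fun uw => ⟨(uw.1.1, uw.1.2), ⟨uw.2, uw.1.1.ne_zero⟩, uw.1.2.ne_zero⟩
        left_inv := fun xy => rfl
        right_inv := fun uw => by ext <;> rfl }

end FermatCurve

theorem natCard_fermatCurve {K : Type*} [Field K] [Finite K] {g : Kˣ}
    (hg : ∀ x, x ∈ zpowers g) {d : ℕ} (hd : d ∣ Nat.card Kˣ) (h2 : Even (Nat.card Kˣ))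
    {i j k : ℕ} (hi : i < d) (hj : j < d) (hk : k < d) :
    Nat.card {P : ℙ K (Fin 3 → K) //
        IsOnFermatCurve ((g ^ i : Kˣ) : K) ((g ^ j : Kˣ) : K) ((g ^ k : Kˣ) : K) d P.rep} =
      d ^ 2 * Nat.card {ab : Kˣ × Kˣ // ab.1 ∈ zpowers (g ^ d) ∧ ab.2 ∈ zpowers (g ^ d) ∧
          ((g ^ i : Kˣ) : K) * (ab.1 : K) + ((g ^ j : Kˣ) : K) * (ab.2 : K) =
            ((g ^ k : Kˣ) : K)} +
        d * ((if j = k then 1 else 0) + (if i = k then 1 else 0) +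
          (if ((Nat.card Kˣ / 2 : ℕ) : ℤ) ≡ (i : ℤ) - (j : ℤ) [ZMOD (d : ℤ)]
            then 1 else 0)) := by
  have hq : 0 < Nat.card Kˣ := Nat.card_pos
  have hd0 : d ≠ 0 := ne_zero_of_dvd_ne_zero hq.ne' hd
  have hord : orderOf g = Nat.card Kˣ := orderOf_eq_card_of_forall_mem_zpowers hg
  have hdo : d ∣ orderOf g := hord ▸ hd
  apply Nat.eq_of_mul_eq_mul_right hq
  rw [Projectivization.natCard_subtype_rep_mul_natCard_units
      fun t v => isOnFermatCurve_smul_iff t.ne_zero v,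
    ← Nat.card_subtype_and_add_card_subtype_and_not _ fun v => v 2 = 0,
    natCard_isOnFermatCurve_and_ne_zero,
    natCard_isOnFermatCurve_and_eq_zero (g ^ i).ne_zero _ _ hd0,
    natCard_diagonal_eq_add _ _ (g ^ k).ne_zero hd0, natCard_diagonal_units hg hd,
    ← Units.val_neg,
    natCard_mul_pow_eq_val hg hd, natCard_mul_pow_eq_val hg hd, natCard_mul_pow_eq_val hg hd]
  simp only [inv_pow_mul_pow_mem_zpowers_pow_iff hdo hj hk,
    inv_pow_mul_pow_mem_zpowers_pow_iff hdo hi hk,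
    Units.inv_pow_mul_neg_pow_mem_zpowers_pow_iff hdo (hord ▸ hq.ne') (hord ▸ h2), hord]
  split_ifs <;> ring

theorem fermat_curve_point_count_general (p : ℕ) [Fact p.Prime] (hodd : Odd p)
    (d i j k : ℕ) (hdvd : d ∣ p - 1)
    (hi : i < d) (hj : j < d) (hk : k < d)
    (g : (ZMod p)ˣ) (hg : ∀ x : (ZMod p)ˣ, x ∈ Subgroup.zpowers g)
    (c M : ℕ)
    (hc : c = Nat.card {ab : (ZMod p)ˣ × (ZMod p)ˣ //
      ab.1 ∈ Subgroup.zpowers (g ^ d) ∧ ab.2 ∈ Subgroup.zpowers (g ^ d) ∧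
      ((g ^ i : (ZMod p)ˣ) : ZMod p) * (ab.1 : ZMod p)
        + ((g ^ j : (ZMod p)ˣ) : ZMod p) * (ab.2 : ZMod p)
        = ((g ^ k : (ZMod p)ˣ) : ZMod p)})
    (hM : M = Nat.card {P : Projectivization (ZMod p) (Fin 3 → ZMod p) //
      ((g ^ i : (ZMod p)ˣ) : ZMod p) * (P.rep 0) ^ d
        + ((g ^ j : (ZMod p)ˣ) : ZMod p) * (P.rep 1) ^ d
        = ((g ^ k : (ZMod p)ˣ) : ZMod p) * (P.rep 2) ^ d}) :
    M = d ^ 2 * c + d * ((if j = k then 1 else 0) + (if i = k then 1 else 0) +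
      (if (((p - 1) / 2 : ℕ) : ℤ) ≡ (i : ℤ) - (j : ℤ) [ZMOD (d : ℤ)] then 1 else 0)) := by
  have hcard : Nat.card (ZMod p)ˣ = p - 1 := by
    rw [Nat.card_eq_fintype_card, ZMod.card_units]
  subst hc hM
  have h := natCard_fermatCurve hg (hcard ▸ hdvd) (hcard ▸ Nat.Odd.sub_odd hodd odd_one)
    hi hj hk
  rwa [hcard] at h

/-- The number `M_{i,j,k}` of projective `F_p`-rational points on the curve
`g^i x^d + g^j y^d = g^k z^d` in `ℙ²(F_p)` satisfies
`M_{i,j,k} = d² c_{i,j,k} + d(δ_{j,k} + δ_{i,k} + δ_*)`, where `δ_* = 1` iff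
`(p-1)/2 ≡ i - j (mod d)`. -/
theorem fermat_curve_point_count (p : ℕ) [Fact p.Prime] (hodd : Odd p)
    (d i j k : ℕ) (hd : 0 < d) (hdvd : d ∣ p - 1)
    (hi : i < d) (hj : j < d) (hk : k < d)
    (g : (ZMod p)ˣ) (hg : ∀ x : (ZMod p)ˣ, x ∈ Subgroup.zpowers g)
    (c M : ℕ)
    (hc : c = Nat.card {ab : (ZMod p)ˣ × (ZMod p)ˣ //
      ab.1 ∈ Subgroup.zpowers (g ^ d) ∧ ab.2 ∈ Subgroup.zpowers (g ^ d) ∧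
      ((g ^ i : (ZMod p)ˣ) : ZMod p) * (ab.1 : ZMod p)
        + ((g ^ j : (ZMod p)ˣ) : ZMod p) * (ab.2 : ZMod p)
        = ((g ^ k : (ZMod p)ˣ) : ZMod p)})
    (hM : M = Nat.card {P : Projectivization (ZMod p) (Fin 3 → ZMod p) //
      ((g ^ i : (ZMod p)ˣ) : ZMod p) * (P.rep 0) ^ d
        + ((g ^ j : (ZMod p)ˣ) : ZMod p) * (P.rep 1) ^ d
        = ((g ^ k : (ZMod p)ˣ) : ZMod p) * (P.rep 2) ^ d}) :
    M = d ^ 2 * c + d * ((if j = k then 1 else 0) + (if i = k then 1 else 0) +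
      (if (((p - 1) / 2 : ℕ) : ℤ) ≡ (i : ℤ) - (j : ℤ) [ZMOD (d : ℤ)] then 1 else 0)) :=
  fermat_curve_point_count_general p hodd d i j k hdvd hi hj hk g hg c M hc hM
end

section
/- If d = 3 divides p-1, then V_4(p) = (10p² - 20p + 1)/27 - (4/3) p t_0, where t_0 = c_{0,0,0} is the number of pairs (a,b) ∈ Γ × Γ with a + b = 1 in F_p. -/
/-!
Let `χ` be a cubic character of `𝔽_q` and `ψ` a nontrivial additive character, and write
`η_c = ∑_{χ x = c} ψ x` for a cube root of unity `c`. Expanding the indicator of `χ x = c` in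
powers of `χ` gives `3 η_c = -1 + c² G + c G'` with the Gauss sums `G = g(χ)`, `G' = g(χ⁻¹)`.
As `χ(-1) = 1` the periods are real, and summing `(3 η_c)⁴` over the three cube roots of unity
leaves a polynomial in `G G' = q`, `G³ = q J(χ, χ)` and `G'³ = q J(χ⁻¹, χ⁻¹)`. Finally,
`Γ = ker χ`, so `t₀` counts the `x` with `χ x = χ (1 - x) = 1`, and expanding
`∑ₓ (1 + χ x + χ⁻¹ x) (1 + χ (1 - x) + χ⁻¹ (1 - x))` in two ways gives
`J(χ, χ) + J(χ⁻¹, χ⁻¹) = 9 t₀ + 8 - q`.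
-/

open Finset

/-- For a cubic `χ` and `c = χ(g)ˢ` with `g` generating `Fˣ`, this is the paper's
`η_s = ∑_{j<k} ψ(g^(3j+s))`. -/
def gaussianPeriod {F R : Type*} [Field F] [Fintype F] [CommRing R] [DecidableEq R]
    (χ : MulChar F R) (ψ : AddChar F R) (c : R) : R :=
  ∑ x with χ x = c, ψ x

section CubicCharacter

variable {F R : Type*} [Field F] [CommRing R] {χ : MulChar F R}

lemma one_add_add_sq_eq_zero [IsDomain R] {ζ : R} (h3 : ζ ^ 3 = 1) (h1 : ζ ≠ 1) :
    1 + ζ + ζ ^ 2 = 0 := by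
  have h : (ζ - 1) * (1 + ζ + ζ ^ 2) = 0 := by linear_combination h3
  exact (mul_eq_zero.1 h).resolve_left (sub_ne_zero.2 h1)

lemma MulChar.apply_pow_three_eq_one (hχ : χ ^ 3 = 1) {x : F} (hx : x ≠ 0) : χ x ^ 3 = 1 := by
  rw [← χ.pow_apply' three_ne_zero, hχ, MulChar.one_apply hx.isUnit]

lemma MulChar.inv_apply_eq_sq (hχ : χ ^ 3 = 1) (x : F) : χ⁻¹ x = χ x ^ 2 := by
  rw [← χ.pow_apply' two_ne_zero, inv_eq_of_mul_eq_one_right (by rw [← pow_succ', hχ])]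

variable [IsDomain R]

lemma one_add_mul_apply_add_mul_inv_apply [DecidableEq F] [DecidableEq R] (hχ : χ ^ 3 = 1)
    {c : R} (hc : c ^ 3 = 1) (x : F) :
    1 + c ^ 2 * χ x + c * χ⁻¹ x = 3 * (if χ x = c then 1 else 0) + if x = 0 then 1 else 0 := by
  rw [χ.inv_apply_eq_sq hχ]
  rcases eq_or_ne x 0 with rfl | hx
  · have hc0 : (0 : R) ≠ c := by rintro rfl; simp at hc
    simp [MulChar.map_zero, hc0]
  rw [if_neg hx, add_zero]
  split_ifs with h
  · rw [h]
    linear_combination 2 * hc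
  · have hζ3 : (c ^ 2 * χ x) ^ 3 = 1 := by
      linear_combination (c ^ 3 + 1) * χ x ^ 3 * hc + χ.apply_pow_three_eq_one hχ hx
    have hζ1 : c ^ 2 * χ x ≠ 1 := fun h1 ↦ h (by linear_combination c * h1 - χ x * hc)
    linear_combination one_add_add_sq_eq_zero hζ3 hζ1 - c * χ x ^ 2 * hc

variable [Fintype F]

lemma gaussSum_mul_gaussSum_inv_eq_card (hχ : χ ^ 3 = 1) (hχ1 : χ ≠ 1) {ψ : AddChar F R}
    (hψ : ψ.IsPrimitive) : gaussSum χ ψ * gaussSum χ⁻¹ ψ = Fintype.card F := by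
  have hχneg : χ⁻¹ (-1) = 1 :=
    MulChar.val_neg_one_eq_one_of_odd_order (by decide : Odd 3) (by rw [inv_pow, hχ, inv_one])
  rw [← mul_gaussSum_inv_eq_gaussSum χ⁻¹ ψ, hχneg, one_mul,
    gaussSum_mul_gaussSum_eq_card hχ1 hψ]

lemma gaussSum_pow_three (hχ : orderOf χ = 3) {ψ : AddChar F R} (hψ : ψ.IsPrimitive) :
    gaussSum χ ψ ^ 3 = Fintype.card F * jacobiSum χ χ := by
  have hχneg : χ (-1) = 1 :=
    MulChar.val_neg_one_eq_one_of_odd_order (by decide : Odd 3) (hχ ▸ pow_orderOf_eq_one χ)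
  simpa [hχ, hχneg] using gaussSum_pow_eq_prod_jacobiSum (hχ ▸ by norm_num : 2 ≤ orderOf χ) hψ

variable [DecidableEq R]

lemma jacobiSum_add_jacobiSum_inv [DecidableEq F] (hχ : χ ^ 3 = 1) (hχ1 : χ ≠ 1) :
    jacobiSum χ χ + jacobiSum χ⁻¹ χ⁻¹
      = 9 * #{x | χ x = 1 ∧ χ (1 - x) = 1} + 8 - Fintype.card F := by
  have hχneg : χ (-1) = 1 := MulChar.val_neg_one_eq_one_of_odd_order (by decide : Odd 3) hχ
  have count : ∑ x, (1 + χ x + χ⁻¹ x) * (1 + χ (1 - x) + χ⁻¹ (1 - x))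
      = 9 * #{x | χ x = 1 ∧ χ (1 - x) = 1} + 6 := by
    have ind (x : F) := one_add_mul_apply_add_mul_inv_apply hχ (one_pow 3) x
    simp only [one_pow, one_mul] at ind
    have pointwise (x : F) : (1 + χ x + χ⁻¹ x) * (1 + χ (1 - x) + χ⁻¹ (1 - x))
        = 9 * (if χ x = 1 ∧ χ (1 - x) = 1 then 1 else 0) + 3 * (if x = 0 then 1 else 0)
          + 3 * (if x = 1 then 1 else 0) := by
      rw [ind, ind]
      rcases eq_or_ne x 0 with rfl | h0
      · simp [MulChar.map_zero]
      rcases eq_or_ne x 1 with rfl | h1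
      · simp [MulChar.map_zero]
      simp only [h0, h1, sub_ne_zero.2 h1.symm, if_false, add_zero, mul_zero]
      split_ifs <;> simp_all; norm_num
    simp only [pointwise, sum_add_distrib, ← mul_sum, sum_boole, filter_eq', mem_univ, if_true,
      card_singleton]
    ring
  have expand : ∑ x, (1 + χ x + χ⁻¹ x) * (1 + χ (1 - x) + χ⁻¹ (1 - x))
      = Fintype.card F + jacobiSum χ χ + jacobiSum χ⁻¹ χ⁻¹ - 2 := by
    have sum_one_sub (φ : MulChar F R) : ∑ x, φ (1 - x) = ∑ x, φ x :=
      Fintype.sum_equiv (Equiv.subLeft 1) _ _ fun _ ↦ rfl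
    simp only [add_mul, mul_add, one_mul, mul_one, sum_add_distrib, sum_one_sub,
      MulChar.sum_eq_zero_of_ne_one hχ1, MulChar.sum_eq_zero_of_ne_one (inv_ne_one.2 hχ1)]
    rw [← jacobiSum, ← jacobiSum, ← jacobiSum, ← jacobiSum, jacobiSum_comm χ⁻¹ χ,
      jacobiSum_nontrivial_inv hχ1, hχneg, sum_const, card_univ, nsmul_one]
    ring
  linear_combination count - expand

theorem three_mul_gaussianPeriod (hχ : χ ^ 3 = 1) {ψ : AddChar F R} (hψ : ψ ≠ 1) {c : R}
    (hc : c ^ 3 = 1) :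
    3 * gaussianPeriod χ ψ c = -1 + c ^ 2 * gaussSum χ ψ + c * gaussSum χ⁻¹ ψ := by
  classical
  have expand : ∑ x, (1 + c ^ 2 * χ x + c * χ⁻¹ x) * ψ x
      = c ^ 2 * gaussSum χ ψ + c * gaussSum χ⁻¹ ψ := by
    simp only [add_mul, sum_add_distrib, one_mul, AddChar.sum_eq_zero_of_ne_one hψ, mul_assoc,
      ← mul_sum, gaussSum, zero_add]
  simp only [one_add_mul_apply_add_mul_inv_apply hχ hc, add_mul, sum_add_distrib, mul_assoc,
    ← mul_sum, ite_mul, one_mul, zero_mul, sum_ite_eq', mem_univ, if_true,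
    AddChar.map_zero_eq_one, ← sum_filter] at expand
  rw [gaussianPeriod]
  linear_combination expand

end CubicCharacter

lemma Complex.ofReal_norm_pow_four_of_conj_eq {z : ℂ} (hz : (starRingEnd ℂ) z = z) :
    ((‖z‖ ^ 4 : ℝ) : ℂ) = z ^ 4 := by
  rw [Complex.ofReal_pow, show 4 = 2 * 2 by rfl, pow_mul, ← Complex.mul_conj', hz]
  ring

lemma conj_gaussianPeriod {F : Type*} [Field F] [Fintype F] {χ : MulChar F ℂ}
    (hχ : χ (-1) = 1) (ψ : AddChar F ℂ) (c : ℂ) :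
    (starRingEnd ℂ) (gaussianPeriod χ ψ c) = gaussianPeriod χ ψ c := by
  have hχneg (x : F) : χ (-x) = χ x := by rw [neg_eq_neg_one_mul, map_mul, hχ, one_mul]
  rw [gaussianPeriod, map_sum]
  refine sum_nbij' Neg.neg Neg.neg ?_ ?_ (fun _ _ ↦ neg_neg _) (fun _ _ ↦ neg_neg _) ?_
  · simp [hχneg]
  · simp [hχneg]
  · simp [AddChar.map_neg_eq_conj]

lemma sum_cubeRoots_neg_one_add_pow_four {R : Type*} [CommRing R] {ω G G' : R}
    (hω : 1 + ω + ω ^ 2 = 0) :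
    ∑ s ∈ range 3, (-1 + (ω ^ s) ^ 2 * G + ω ^ s * G') ^ 4
      = 3 * (1 + 12 * (G * G') + 6 * (G * G') ^ 2 - 4 * (G ^ 3 + G' ^ 3)) := by
  simp only [sum_range_succ, sum_range_zero]
  grind

theorem sum_norm_gaussianPeriod_pow_four {F : Type*} [Field F] [Fintype F]
    {χ : MulChar F ℂ} (hχ : orderOf χ = 3) {ψ : AddChar F ℂ} (hψ : ψ.IsPrimitive) {ω : ℂ}
    (hω3 : ω ^ 3 = 1) (hω1 : ω ≠ 1) :
    ∑ s ∈ range 3, ‖gaussianPeriod χ ψ (ω ^ s)‖ ^ 4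
      = (10 * (Fintype.card F : ℝ) ^ 2 - 20 * Fintype.card F + 1) / 27
        - 4 / 3 * Fintype.card F * #{x | χ x = 1 ∧ χ (1 - x) = 1} := by
  classical
  have hχ3 : χ ^ 3 = 1 := hχ ▸ pow_orderOf_eq_one χ
  have hχ1 : χ ≠ 1 := by rintro rfl; simp at hχ
  have hψ1 : ψ ≠ 1 := by simpa using hψ one_ne_zero
  set G := gaussSum χ ψ
  set G' := gaussSum χ⁻¹ ψ
  have hperiod (s : ℕ) :
      3 * gaussianPeriod χ ψ (ω ^ s) = -1 + (ω ^ s) ^ 2 * G + ω ^ s * G' :=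
    three_mul_gaussianPeriod hχ3 hψ1 (by rw [← pow_mul, mul_comm, pow_mul, hω3, one_pow])
  have hreal (s : ℕ) :
      ((‖gaussianPeriod χ ψ (ω ^ s)‖ ^ 4 : ℝ) : ℂ) = gaussianPeriod χ ψ (ω ^ s) ^ 4 :=
    Complex.ofReal_norm_pow_four_of_conj_eq
      (conj_gaussianPeriod (MulChar.val_neg_one_eq_one_of_odd_order (by decide) hχ3) ψ _)
  have hsum := sum_cubeRoots_neg_one_add_pow_four (G := G) (G' := G')
    (one_add_add_sq_eq_zero hω3 hω1)
  simp only [← hperiod, mul_pow, ← mul_sum] at hsum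
  apply Complex.ofReal_injective
  push_cast [hreal]
  linear_combination (1 / 81) * hsum
    + (12 + 6 * (G * G' + Fintype.card F)) / 27 * gaussSum_mul_gaussSum_inv_eq_card hχ3 hχ1 hψ
    - 4 / 27 * gaussSum_pow_three hχ hψ - 4 / 27 * gaussSum_pow_three (orderOf_inv χ ▸ hχ) hψ
    - 4 * Fintype.card F / 27 * jacobiSum_add_jacobiSum_inv hχ3 hχ1

section Generator

variable {F R : Type*} [Field F] [CommRing R] {χ : MulChar F R} {g : Fˣ}

lemma MulChar.orderOf_apply_eq_orderOf (hg : ∀ x, x ∈ Subgroup.zpowers g) :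
    orderOf (χ g) = orderOf χ :=
  orderOf_eq_orderOf_iff.2 fun n ↦ by
    rw [MulChar.eq_iff hg, MulChar.pow_apply_coe, MulChar.one_apply_coe]

variable [Fintype F]

lemma MulChar.apply_eq_one_iff_mem_zpowers (hg : ∀ x, x ∈ Subgroup.zpowers g) {d : ℕ}
    (hχg : orderOf (χ g) = d) (u : Fˣ) : χ u = 1 ↔ u ∈ Subgroup.zpowers (g ^ d) := by
  constructor
  · intro hu
    obtain ⟨m, rfl⟩ := (Submonoid.mem_powers_iff _ _).1 (mem_powers_iff_mem_zpowers.2 (hg u))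
    rw [Units.val_pow_eq_pow_val, map_pow, ← orderOf_dvd_iff_pow_eq_one, hχg] at hu
    obtain ⟨n, rfl⟩ := hu
    rw [pow_mul]
    exact Subgroup.npow_mem_zpowers _ n
  · intro hu
    have hker : Subgroup.zpowers (g ^ d) ≤ χ.toUnitHom.ker := by
      rw [Subgroup.zpowers_le, MonoidHom.mem_ker, map_pow, ← hχg, Units.ext_iff,
        Units.val_pow_eq_pow_val, MulChar.coe_toUnitHom, Units.val_one, pow_orderOf_eq_one]
    simpa using congrArg Units.val (MonoidHom.mem_ker.1 (hker hu))

variable [DecidableEq R] [Nontrivial R]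

lemma sum_range_pow_mul_add_eq_sum_filter (hg : ∀ x, x ∈ Subgroup.zpowers g) {d k : ℕ}
    (hgk : orderOf g = d * k) (hχg : orderOf (χ g) = d) {s : ℕ} (hs : s < d)
    {β : Type*} [AddCommMonoid β] (f : F → β) :
    ∑ j ∈ range k, f (g ^ (d * j + s) : Fˣ) = ∑ x with χ x = χ g ^ s, f x := by
  classical
  have hχgd : χ g ^ d = 1 := hχg ▸ pow_orderOf_eq_one _
  have hlt {j : ℕ} (hj : j < k) : d * j + s < orderOf g := by rw [hgk]; nlinarith
  refine sum_bij (fun j _ ↦ ((g ^ (d * j + s) : Fˣ) : F)) (fun j _ ↦ ?_)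
    (fun j₁ hj₁ j₂ hj₂ h ↦ ?_) (fun x hx ↦ ?_) (fun _ _ ↦ rfl)
  · simp [pow_add, pow_mul, hχgd]
  · have := pow_injOn_Iio_orderOf (hlt (mem_range.1 hj₁)) (hlt (mem_range.1 hj₂)) (Units.ext h)
    exact Nat.eq_of_mul_eq_mul_left (by omega : 0 < d) (by omega)
  · have hx : χ x = χ g ^ s := (mem_filter.1 hx).2
    have hx0 : x ≠ 0 := by
      rintro rfl
      exact ((IsUnit.of_pow_eq_one hχgd (by omega)).pow s).ne_zero (hx.symm.trans χ.map_zero)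
    obtain ⟨m, hm, hgm⟩ :=
      mem_image.1 (mem_zpowers_iff_mem_range_orderOf.1 (hg (Units.mk0 x hx0)))
    rw [← Units.val_mk0 hx0, ← hgm, Units.val_pow_eq_pow_val, map_pow,
      (orderOf_pos_iff.1 (by omega : 0 < orderOf (χ g))).pow_eq_pow_iff_modEq, hχg] at hx
    refine ⟨m / d, mem_range.2 ((Nat.div_lt_iff_lt_mul (by omega)).2
      ((mem_range.1 hm).trans_eq (hgk.trans (mul_comm _ _)))), ?_⟩
    rw [← Nat.mod_eq_of_lt hs, ← hx, Nat.div_add_mod, hgm, Units.val_mk0]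

lemma natCard_units_add_eq_one (χ : MulChar F R) {S : Subgroup Fˣ}
    (hS : ∀ u : Fˣ, χ u = 1 ↔ u ∈ S) :
    Nat.card {ab : Fˣ × Fˣ // ab.1 ∈ S ∧ ab.2 ∈ S ∧ (ab.1 : F) + ab.2 = 1}
      = #{x | χ x = 1 ∧ χ (1 - x) = 1} := by
  have hne {x : F} (hx : χ x = 1) : x ≠ 0 := by rintro rfl; simp [MulChar.map_zero] at hx
  rw [← Fintype.card_subtype, ← Nat.card_eq_fintype_card]
  refine Nat.card_congr
    { toFun ab := ⟨ab.1.1, (hS _).2 ab.2.1, by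
        rw [← eq_sub_of_add_eq' ab.2.2.2]; exact (hS _).2 ab.2.2.1⟩
      invFun x := ⟨(Units.mk0 x.1 (hne x.2.1), Units.mk0 (1 - x.1) (hne x.2.2)),
        (hS _).1 x.2.1, (hS _).1 x.2.2, add_sub_cancel _ _⟩
      left_inv ab := Subtype.ext <|
        Prod.ext (Units.ext rfl) (Units.ext (eq_sub_of_add_eq' ab.2.2.2).symm)
      right_inv _ := rfl }

end Generator

theorem gaussian_periods_V4_d3_general (p k : ℕ) (hp : p.Prime)
    (hk : p - 1 = 3 * k)
    (g : (ZMod p)ˣ) (hg : ∀ x : (ZMod p)ˣ, x ∈ Subgroup.zpowers g)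
    (η : ℕ → ℂ)
    (hη : ∀ a : ℕ, η a = ∑ j ∈ Finset.range k,
      Complex.exp (2 * (Real.pi : ℂ) * Complex.I *
        (((g ^ (3 * j + a) : (ZMod p)ˣ) : ZMod p).val : ℂ) / (p : ℂ)))
    (t₀ : ℕ)
    (ht : t₀ = Nat.card {ab : (ZMod p)ˣ × (ZMod p)ˣ //
      ab.1 ∈ Subgroup.zpowers (g ^ 3) ∧ ab.2 ∈ Subgroup.zpowers (g ^ 3) ∧
      (ab.1 : ZMod p) + (ab.2 : ZMod p) = 1}) :
    ∑ s ∈ Finset.range 3, ‖η s‖ ^ 4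
      = (10 * (p : ℝ) ^ 2 - 20 * p + 1) / 27 - (4 / 3) * p * t₀ := by
  have : Fact p.Prime := ⟨hp⟩
  obtain ⟨χ, hχ⟩ := MulChar.exists_mulChar_orderOf (ZMod p)
    (by rw [ZMod.card, hk]; exact dvd_mul_right 3 k) (Complex.isPrimitiveRoot_exp 3 (by norm_num))
  have hgk : orderOf g = 3 * k := by
    rw [orderOf_eq_card_of_forall_mem_zpowers hg, Nat.card_eq_fintype_card, ZMod.card_units, hk]
  have hχg : orderOf (χ g) = 3 := (MulChar.orderOf_apply_eq_orderOf hg).trans hχ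
  have hperiod (s : ℕ) (hs : s < 3) : η s = gaussianPeriod χ ZMod.stdAddChar (χ g ^ s) := by
    rw [hη, gaussianPeriod, ← sum_range_pow_mul_add_eq_sum_filter hg hgk hχg hs]
    simp [ZMod.stdAddChar_apply, ZMod.toCircle_apply]
  have hcount : t₀ = #{x | χ x = 1 ∧ χ (1 - x) = 1} :=
    ht.trans (natCard_units_add_eq_one χ (MulChar.apply_eq_one_iff_mem_zpowers hg hχg))
  rw [sum_congr rfl fun s hs ↦ by rw [hperiod s (mem_range.1 hs)],
    sum_norm_gaussianPeriod_pow_four hχ (ZMod.isPrimitive_stdAddChar p)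
      (hχg ▸ pow_orderOf_eq_one _) (fun h ↦ by simp [h] at hχg), ZMod.card, hcount]

/-- If `d = 3` divides `p-1`, then `V₄(p) = (10p² - 20p + 1)/27 - (4/3) p t₀`,
where `t₀` is the number of pairs `(a,b) ∈ Γ × Γ` with `a + b = 1`. -/
theorem gaussian_periods_V4_d3 (p k : ℕ) (hp : p.Prime) (hodd : Odd p)
    (hk : p - 1 = 3 * k)
    (g : (ZMod p)ˣ) (hg : ∀ x : (ZMod p)ˣ, x ∈ Subgroup.zpowers g)
    (η : ℕ → ℂ)
    (hη : ∀ a : ℕ, η a = ∑ j ∈ Finset.range k,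
      Complex.exp (2 * (Real.pi : ℂ) * Complex.I *
        (((g ^ (3 * j + a) : (ZMod p)ˣ) : ZMod p).val : ℂ) / (p : ℂ)))
    (t₀ : ℕ)
    (ht : t₀ = Nat.card {ab : (ZMod p)ˣ × (ZMod p)ˣ //
      ab.1 ∈ Subgroup.zpowers (g ^ 3) ∧ ab.2 ∈ Subgroup.zpowers (g ^ 3) ∧
      (ab.1 : ZMod p) + (ab.2 : ZMod p) = 1}) :
    ∑ s ∈ Finset.range 3, ‖η s‖ ^ 4
      = (10 * (p : ℝ) ^ 2 - 20 * p + 1) / 27 - (4 / 3) * p * t₀ :=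
  gaussian_periods_V4_d3_general p k hp hk g hg η hη t₀ ht
end

section
/- If d divides p-1, then V_4(p) = p·(p-1)/d + p·Σ_{l=0}^{d-1} c_{0,l,0}² − ((p-1)/d)³, where c_{0,l,0} is the number of pairs (a,b) ∈ Γ × g^l Γ with a + b = 1. -/
/-!
Up to the factor `k = |Γ|`, `V₄(p)` is the fourth moment of `S(t) = ∑_{y ∈ Γ} ψ(t y)` over
`t ∈ 𝔽_p^×`, because `S` is constant on the cosets `g^s Γ`. Adding `t = 0` (which contributes
`k⁴`), orthogonality of additive characters turns the full fourth moment into `p ∑_e r(e)²`,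
where `r(e)` counts the pairs `x, y ∈ Γ` with `x - y = e`. Finally `r(0) = k`, `r` is constant on
cosets of `Γ`, and `(x, y) ↦ (y/x, e/x)` matches the pairs with `x - y = e` with the solutions of
`a + b = 1`, `a ∈ Γ`, `b ∈ eΓ`, so that `r(g^l) = c_{0,l,0}`.
-/

open Finset Subgroup ComplexConjugate

theorem orderOf_pow_of_orderOf_eq_mul {G : Type*} [Group G] [Finite G] {g : G} {d k : ℕ}
    (hdk : orderOf g = d * k) : orderOf (g ^ d) = k := by
  obtain ⟨hd, -⟩ := mul_ne_zero_iff.1 (hdk ▸ (orderOf_pos g).ne')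
  rw [orderOf_pow_of_dvd hd ⟨k, hdk⟩, hdk, Nat.mul_div_cancel_left k (Nat.pos_of_ne_zero hd)]

section Cosets

variable {G M : Type*} [Group G] [Fintype G] [AddCommMonoid M]

theorem sum_range_mul_mod (h : ℕ → M) (d k : ℕ) :
    ∑ n ∈ range (d * k), h (n % d) = k • ∑ l ∈ range d, h l := by
  induction k with
  | zero => simp
  | succ k ih =>
    rw [Nat.mul_succ, sum_range_add, ih, succ_nsmul]
    congr 1
    refine sum_congr rfl fun l hl => ?_
    rw [Nat.mul_add_mod, Nat.mod_eq_of_lt (mem_range.1 hl)]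

theorem sum_eq_smul_sum_range_pow [DecidableEq G] {g : G} (hg : ∀ x, x ∈ zpowers g) {d k : ℕ}
    (hdk : orderOf g = d * k) {φ : G → M}
    (hφ : ∀ x, ∀ γ ∈ zpowers (g ^ d), φ (x * γ) = φ x) :
    ∑ x, φ x = k • ∑ l ∈ range d, φ (g ^ l) := by
  have hmod (n : ℕ) : φ (g ^ n) = φ (g ^ (n % d)) := by
    conv_lhs => rw [← Nat.mod_add_div n d, pow_add, pow_mul]
    exact hφ _ _ (npow_mem_zpowers _ _)
  rw [← IsCyclic.image_range_orderOf hg, sum_image (by simpa using pow_injOn_Iio_orderOf), hdk,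
    sum_congr rfl fun n _ => hmod n]
  exact sum_range_mul_mod (fun l => φ (g ^ l)) d k

theorem sum_filter_mem_zpowers [DecidableEq G] (h : G) [DecidablePred (· ∈ zpowers h)]
    (φ : G → M) :
    ∑ y ∈ univ.filter (· ∈ zpowers h), φ y = ∑ j ∈ range (orderOf h), φ (h ^ j) := by
  rw [← sum_image (g := (h ^ ·)) (by simpa using pow_injOn_Iio_orderOf (x := h))]
  congr 1
  ext y
  simp [mem_zpowers_iff_mem_range_orderOf]

theorem sum_filter_mem_mul_left (H : Subgroup G) [DecidablePred (· ∈ H)] {γ : G} (hγ : γ ∈ H)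
    (φ : G → M) : ∑ y ∈ univ.filter (· ∈ H), φ (γ * y) = ∑ y ∈ univ.filter (· ∈ H), φ y :=
  sum_nbij' (γ * ·) (γ⁻¹ * ·) (by simp +contextual [mul_mem hγ])
    (by simp +contextual [mul_mem (inv_mem hγ)]) (by simp) (by simp) (fun _ _ => rfl)

end Cosets

section FourthMoment

variable {R ι : Type*} [CommRing R] [DecidableEq R]

def diffRepr (s : Finset ι) (f : ι → R) (e : R) : ℕ := #{p ∈ s ×ˢ s | f p.1 - f p.2 = e}

theorem diffRepr_zero {s : Finset ι} {f : ι → R} (hf : Function.Injective f) :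
    diffRepr s f 0 = #s := by
  suffices h : ({p ∈ s ×ˢ s | f p.1 - f p.2 = 0} : Finset _) = s.diag by
    rw [diffRepr, h, diag_card]
  ext ⟨x, y⟩
  simp only [mem_filter, mem_product, sub_eq_zero, hf.eq_iff, mem_diag]
  aesop

variable [Fintype R]

theorem mul_conj_sum_addChar (ψ : AddChar R ℂ) (s : Finset ι) (f : ι → R) (t : R) :
    (∑ i ∈ s, ψ (t * f i)) * conj (∑ i ∈ s, ψ (t * f i))
      = ∑ e, (diffRepr s f e : ℂ) * ψ (t * e) := by
  simp_rw [map_sum, ← AddChar.map_neg_eq_conj, sum_mul_sum, ← sum_product',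
    ← AddChar.map_add_eq_mul, ← mul_neg, ← mul_add, ← sub_eq_add_neg]
  rw [← sum_fiberwise (s ×ˢ s) (fun p => f p.1 - f p.2)]
  refine sum_congr rfl fun e _ => ?_
  rw [sum_congr rfl fun p hp => by rw [(mem_filter.1 hp).2], sum_const, nsmul_eq_mul, diffRepr]

theorem sum_norm_sum_addChar_pow_four {ψ : AddChar R ℂ} (hψ : ψ.IsPrimitive) (s : Finset ι)
    (f : ι → R) :
    ∑ t, ‖∑ i ∈ s, ψ (t * f i)‖ ^ 4 = Fintype.card R * ∑ e, (diffRepr s f e : ℝ) ^ 2 := by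
  have hnorm (z : ℂ) : ((‖z‖ ^ 4 : ℝ) : ℂ) = z * conj z * conj (z * conj z) := by
    rw [Complex.mul_conj', norm_mul, Complex.norm_conj]
    push_cast
    ring
  have hexpand (t : R) : (∑ e, (diffRepr s f e : ℂ) * ψ (t * e))
      * conj (∑ e, (diffRepr s f e : ℂ) * ψ (t * e))
      = ∑ e, ∑ e', (diffRepr s f e : ℂ) * diffRepr s f e' * ψ (t * (e - e')) := by
    rw [map_sum, sum_mul_sum]
    refine sum_congr rfl fun e _ => sum_congr rfl fun e' _ => ?_
    rw [map_mul (starRingEnd ℂ), Complex.conj_natCast, ← AddChar.map_neg_eq_conj, mul_sub,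
      sub_eq_add_neg, AddChar.map_add_eq_mul]
    ring
  apply Complex.ofReal_injective
  push_cast
  simp_rw [← Complex.ofReal_pow, hnorm, mul_conj_sum_addChar, hexpand]
  rw [sum_comm, mul_sum]
  refine sum_congr rfl fun e _ => ?_
  rw [sum_comm]
  simp_rw [← mul_sum, AddChar.sum_mulShift _ hψ, sub_eq_zero, Nat.cast_ite, Nat.cast_zero,
    mul_ite, mul_zero, sum_ite_eq, if_pos (mem_univ _)]
  ring

end FourthMoment

section GaussPeriod

variable {F : Type*} [Field F] [Fintype F] [DecidableEq F]

theorem sum_eq_add_sum_units {M : Type*} [AddCommMonoid M] (φ : F → M) :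
    ∑ t, φ t = φ 0 + ∑ x : Fˣ, φ x := by
  rw [Fintype.sum_eq_add_sum_subtype_ne φ 0, ← unitsEquivNeZero.sum_comp]
  rfl

variable (ψ : AddChar F ℂ) (H : Subgroup Fˣ) [DecidablePred (· ∈ H)]

def gaussPeriod (t : F) : ℂ := ∑ y ∈ univ.filter (· ∈ H), ψ (t * y)

theorem gaussPeriod_zero : gaussPeriod ψ H 0 = #(univ.filter (· ∈ H)) := by
  simp [gaussPeriod]

theorem gaussPeriod_mul_of_mem {γ : Fˣ} (hγ : γ ∈ H) (t : F) :
    gaussPeriod ψ H (t * γ) = gaussPeriod ψ H t := by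
  rw [gaussPeriod, gaussPeriod, ← sum_filter_mem_mul_left H hγ fun y => ψ (t * y)]
  simp only [Units.val_mul, mul_assoc]

theorem diffRepr_mul_of_mem {γ : Fˣ} (hγ : γ ∈ H) (e : F) :
    diffRepr (univ.filter (· ∈ H)) ((↑) : Fˣ → F) (e * γ)
      = diffRepr (univ.filter (· ∈ H)) ((↑) : Fˣ → F) e := by
  refine card_nbij' (fun p => (γ⁻¹ * p.1, γ⁻¹ * p.2)) (fun p => (γ * p.1, γ * p.2))
    ?_ ?_ (fun p _ => by simp) (fun p _ => by simp)
  · rintro ⟨x, y⟩ hxy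
    simp only [coe_filter, mem_product, mem_filter, mem_univ, true_and, Set.mem_ofPred_eq,
      Units.val_mul, ← mul_sub, Units.val_inv_eq_inv_val] at hxy ⊢
    refine ⟨⟨mul_mem (inv_mem hγ) hxy.1.1, mul_mem (inv_mem hγ) hxy.1.2⟩, ?_⟩
    rw [hxy.2]
    field_simp
  · rintro ⟨x, y⟩ hxy
    simp only [coe_filter, mem_product, mem_filter, mem_univ, true_and, Set.mem_ofPred_eq,
      Units.val_mul, ← mul_sub] at hxy ⊢
    refine ⟨⟨mul_mem hγ hxy.1.1, mul_mem hγ hxy.1.2⟩, ?_⟩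
    rw [hxy.2, mul_comm]

theorem card_add_eq_one_eq_diffRepr (e : Fˣ) :
    Nat.card {ab : Fˣ × Fˣ // ab.1 ∈ H ∧ (∃ b ∈ H, ab.2 = e * b) ∧ (ab.1 : F) + ab.2 = 1}
      = diffRepr (univ.filter (· ∈ H)) ((↑) : Fˣ → F) e := by
  rw [Nat.card_eq_fintype_card, Fintype.card_subtype, diffRepr]
  refine card_nbij' (fun ab => (e * ab.2⁻¹, ab.1 * e * ab.2⁻¹))
    (fun p => (p.2 * p.1⁻¹, e * p.1⁻¹)) ?_ ?_ ?_ ?_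
  · rintro ⟨a, b⟩ hab
    simp only [coe_filter, mem_univ, true_and, Set.mem_ofPred_eq] at hab
    obtain ⟨ha, ⟨γ, hγ, rfl⟩, hab⟩ := hab
    simp only [coe_filter, mem_product, mem_filter, mem_univ, true_and, Set.mem_ofPred_eq]
    refine ⟨⟨by simpa using inv_mem hγ, by simpa [mul_assoc] using mul_mem ha (inv_mem hγ)⟩, ?_⟩
    push_cast [Units.val_inv_eq_inv_val] at hab ⊢
    field_simp
    linear_combination -hab
  · rintro ⟨x, y⟩ hxy
    simp only [coe_filter, mem_product, mem_filter, mem_univ, true_and, Set.mem_ofPred_eq] at hxy ⊢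
    obtain ⟨⟨hx, hy⟩, hxy⟩ := hxy
    refine ⟨mul_mem hy (inv_mem hx), ⟨x⁻¹, inv_mem hx, rfl⟩, ?_⟩
    push_cast [Units.val_inv_eq_inv_val]
    field_simp
    linear_combination -hxy
  · rintro ⟨a, b⟩ -
    ext <;> simp
  · rintro ⟨x, y⟩ -
    ext <;> simp
    field_simp

theorem sum_range_norm_gaussPeriod_pow_four {ψ : AddChar F ℂ} (hψ : ψ.IsPrimitive) {g : Fˣ}
    (hg : ∀ x, x ∈ zpowers g) {d k : ℕ} (hdk : orderOf g = d * k)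
    [DecidablePred (· ∈ zpowers (g ^ d))] :
    ∑ s ∈ range d, ‖gaussPeriod ψ (zpowers (g ^ d)) ((g ^ s : Fˣ) : F)‖ ^ 4
      = Fintype.card F * k + Fintype.card F * ∑ l ∈ range d,
          (diffRepr (univ.filter (· ∈ zpowers (g ^ d))) ((↑) : Fˣ → F) ((g ^ l : Fˣ) : F) : ℝ) ^ 2
        - (k : ℝ) ^ 3 := by
  have hΓ := orderOf_pow_of_orderOf_eq_mul hdk
  have hcard : #(univ.filter (· ∈ zpowers (g ^ d))) = k := by
    simpa [hΓ] using sum_filter_mem_zpowers (M := ℕ) (g ^ d) 1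
  have h : ∑ t, ‖gaussPeriod ψ (zpowers (g ^ d)) t‖ ^ 4 = Fintype.card F *
      ∑ e, (diffRepr (univ.filter (· ∈ zpowers (g ^ d))) ((↑) : Fˣ → F) e : ℝ) ^ 2 :=
    sum_norm_sum_addChar_pow_four hψ _ _
  rw [sum_eq_add_sum_units (F := F), sum_eq_add_sum_units (F := F),
    sum_eq_smul_sum_range_pow hg hdk fun x γ hγ => by
      rw [Units.val_mul, gaussPeriod_mul_of_mem ψ _ hγ],
    sum_eq_smul_sum_range_pow hg hdk fun x γ hγ => by
      rw [Units.val_mul, diffRepr_mul_of_mem _ hγ],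
    gaussPeriod_zero, diffRepr_zero Units.val_injective, hcard, Complex.norm_natCast,
    nsmul_eq_mul, nsmul_eq_mul] at h
  apply mul_left_cancel₀ (Nat.cast_ne_zero.2 (hΓ ▸ (orderOf_pos _).ne') : (k : ℝ) ≠ 0)
  linear_combination h

end GaussPeriod

theorem gaussian_periods_V4_general_general (p d k : ℕ) (hp : p.Prime)
    (hdk : p - 1 = d * k)
    (g : (ZMod p)ˣ) (hg : ∀ x : (ZMod p)ˣ, x ∈ Subgroup.zpowers g)
    (η : ℕ → ℂ)
    (hη : ∀ a : ℕ, η a = ∑ j ∈ Finset.range k,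
      Complex.exp (2 * (Real.pi : ℂ) * Complex.I *
        (((g ^ (d * j + a) : (ZMod p)ˣ) : ZMod p).val : ℂ) / (p : ℂ)))
    (c : ℕ → ℕ)
    (hc : ∀ l : ℕ, c l = Nat.card {ab : (ZMod p)ˣ × (ZMod p)ˣ //
      ab.1 ∈ Subgroup.zpowers (g ^ d) ∧
      (∃ b ∈ Subgroup.zpowers (g ^ d), ab.2 = g ^ l * b) ∧
      (ab.1 : ZMod p) + (ab.2 : ZMod p) = 1}) :
    ∑ s ∈ Finset.range d, ‖η s‖ ^ 4
      = (p : ℝ) * k + (p : ℝ) * ∑ l ∈ Finset.range d, (c l : ℝ) ^ 2 - (k : ℝ) ^ 3 := by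
  classical
  have : Fact p.Prime := ⟨hp⟩
  have horder : orderOf g = d * k := by
    rw [orderOf_eq_card_of_forall_mem_zpowers hg, Nat.card_eq_fintype_card, ZMod.card_units, hdk]
  have hΓ := orderOf_pow_of_orderOf_eq_mul horder
  have hη' (s : ℕ) : η s = gaussPeriod ZMod.stdAddChar (zpowers (g ^ d)) ↑(g ^ s) := by
    rw [hη, gaussPeriod, sum_filter_mem_zpowers, hΓ]
    refine sum_congr rfl fun j _ => ?_
    rw [ZMod.stdAddChar_apply, ZMod.toCircle_apply, pow_add, pow_mul, mul_comm _ (g ^ s),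
      Units.val_mul]
  simp_rw [hη', hc, card_add_eq_one_eq_diffRepr,
    sum_range_norm_gaussPeriod_pow_four (ZMod.isPrimitive_stdAddChar p) hg horder, ZMod.card]

/-- If `d ∣ p-1`, then `V₄(p) = p(p-1)/d + p ∑_{l=0}^{d-1} c_{0,l,0}² − ((p-1)/d)³`,
where `c_{0,l,0}` is the number of pairs `(a,b) ∈ Γ × g^l Γ` with `a + b = 1`. -/
theorem gaussian_periods_V4_general (p d k : ℕ) (hp : p.Prime) (hodd : Odd p)
    (hd : 0 < d) (hdk : p - 1 = d * k)
    (g : (ZMod p)ˣ) (hg : ∀ x : (ZMod p)ˣ, x ∈ Subgroup.zpowers g)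
    (η : ℕ → ℂ)
    (hη : ∀ a : ℕ, η a = ∑ j ∈ Finset.range k,
      Complex.exp (2 * (Real.pi : ℂ) * Complex.I *
        (((g ^ (d * j + a) : (ZMod p)ˣ) : ZMod p).val : ℂ) / (p : ℂ)))
    (c : ℕ → ℕ)
    (hc : ∀ l : ℕ, c l = Nat.card {ab : (ZMod p)ˣ × (ZMod p)ˣ //
      ab.1 ∈ Subgroup.zpowers (g ^ d) ∧
      (∃ b ∈ Subgroup.zpowers (g ^ d), ab.2 = g ^ l * b) ∧
      (ab.1 : ZMod p) + (ab.2 : ZMod p) = 1}) :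
    ∑ s ∈ Finset.range d, ‖η s‖ ^ 4
      = (p : ℝ) * k + (p : ℝ) * ∑ l ∈ Finset.range d, (c l : ℝ) ^ 2 - (k : ℝ) ^ 3 :=
  gaussian_periods_V4_general_general p d k hp hdk g hg η hη c hc
end

section
/- For d > 2 dividing p-1, Σ_{m=0}^{d-1} Σ_{n=0}^{d-1} c_{0,m,n}² = (p² + (d² - 3d - 2)p + 3d + 1)/d². -/
/-!
Write `N(u, v)` for the number of `(a, b) ∈ Γ × Γ` with `a + u b = v`, so `c_{0,m,n} = N(g^m, g^n)`,
and `t = |Γ| = (p - 1)/d`. As `N(uγ, vδ) = N(u, v)` for `γ, δ ∈ Γ`, the sum of `N(u, v)²` over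
`u, v ∈ F_p^×` is `t²` times the required sum. Letting `v` run over all of `F_p` instead, the sum
counts pairs of points `(a, b), (a', b')` of `Γ × Γ` together with a unit `u` such that
`a + u b = a' + u b'`: every `u` works for a repeated point, exactly one `u` when `a ≠ a'` and
`b ≠ b'`, and none otherwise. The extra term `v = 0` is `N(u, 0)² = t²` exactly when `-u ∈ Γ`.
Altogether `t² Σ c² + t³ = t² (p - 1) + t² (t - 1)²`.
-/

open Finset Subgroup

theorem card_zpowers_pow_mul {G : Type*} [Group G] [Finite G] {g : G}
    (hg : ∀ x, x ∈ zpowers g) {d : ℕ} (hd : d ∣ Nat.card G) :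
    Nat.card (zpowers (g ^ d)) * d = Nat.card G := by
  rw [← orderOf_eq_card_of_forall_mem_zpowers hg] at hd ⊢
  have hd0 : d ≠ 0 := by rintro rfl; simp [orderOf_pos g |>.ne'] at hd
  rw [Nat.card_zpowers, orderOf_pow_of_dvd hd0 hd, Nat.div_mul_cancel hd]

theorem sum_eq_card_zpowers_pow_smul_sum_range {G M : Type*} [Group G] [Fintype G]
    [AddCommMonoid M] {g : G} (hg : ∀ x, x ∈ zpowers g) {d : ℕ}
    (hd : d ∣ Nat.card G) (f : G → M) (hf : ∀ x, ∀ h ∈ zpowers (g ^ d), f (x * h) = f x) :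
    ∑ x, f x = Nat.card (zpowers (g ^ d)) • ∑ m ∈ range d, f (g ^ m) := by
  classical
  have hcard := card_zpowers_pow_mul hg hd
  have hd0 : 0 < d := Nat.pos_of_ne_zero <| by rintro rfl; simp [eq_comm] at hcard
  let φ : Fin d × zpowers (g ^ d) → G := fun mh => g ^ (mh.1 : ℕ) * mh.2
  have hsurj : φ.Surjective := by
    intro x
    obtain ⟨k, rfl⟩ := mem_powers_iff_mem_zpowers.mpr (hg x)
    refine ⟨(⟨k % d, Nat.mod_lt _ hd0⟩, ⟨(g ^ d) ^ (k / d), pow_mem (mem_zpowers _) _⟩),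
      ?_⟩
    simp only [φ, ← pow_mul, ← pow_add, Nat.mod_add_div]
  have hbij : φ.Bijective := by
    rw [Fintype.bijective_iff_surjective_and_card]
    refine ⟨hsurj, ?_⟩
    rw [Fintype.card_prod, Fintype.card_fin, ← Nat.card_eq_fintype_card,
      ← Nat.card_eq_fintype_card, mul_comm, hcard]
  rw [← hbij.sum_comp, Fintype.sum_prod_type, ← Fin.sum_univ_eq_sum_range (fun m => f (g ^ m)),
    smul_sum]
  refine sum_congr rfl fun m _ => ?_
  simp only [φ, hf _ _ (Subtype.prop _), sum_const, card_univ, Nat.card_eq_fintype_card]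

theorem sum_natCard_fiber_sq {α β : Type*} [Finite α] [Fintype β] (f : α → β) :
    ∑ y, Nat.card {x // f x = y} ^ 2 = Nat.card {p : α × α // f p.1 = f p.2} := by
  let e : {p : α × α // f p.1 = f p.2} ≃ Σ y, {x // f x = y} × {x // f x = y} :=
    { toFun := fun p => ⟨f p.1.1, ⟨p.1.1, rfl⟩, ⟨p.1.2, p.2.symm⟩⟩
      invFun := fun q => ⟨(q.2.1, q.2.2), q.2.1.2.trans q.2.2.2.symm⟩
      left_inv := fun _ => rfl
      right_inv := by rintro ⟨y, ⟨x, rfl⟩, ⟨x', hx'⟩⟩; rfl }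
  simp only [Nat.card_congr e, Nat.card_sigma, Nat.card_prod, sq]

theorem sum_natCard_subtype_comm {α β : Type*} [Fintype α] [Fintype β]
    (r : α → β → Prop) :
    ∑ a, Nat.card {b // r a b} = ∑ b, Nat.card {a // r a b} := by
  classical
  simp only [Nat.card_eq_fintype_card, Fintype.card_subtype, card_filter]
  exact Finset.sum_comm

theorem sum_prod_ite_fst_eq_snd {α M : Type*} [Fintype α] [DecidableEq α] [AddCommMonoid M]
    (X Y : M) : ∑ p : α × α, (if p.1 = p.2 then X else Y) =
      Fintype.card α • X + (Fintype.card α * (Fintype.card α - 1)) • Y := by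
  have hdiag : ({p | p.1 = p.2} : Finset (α × α)) = univ.diag := by ext; simp
  have hoff : ({p | ¬p.1 = p.2} : Finset (α × α)) = univ.offDiag := by ext; simp
  rw [Finset.sum_ite, sum_const, sum_const, hdiag, hoff, diag_card, offDiag_card, card_univ,
    Nat.mul_sub_one]

theorem Fintype.sum_eq_add_sum_units {K M : Type*} [GroupWithZero K] [Fintype K]
    [DecidableEq K] [AddCommMonoid M] (f : K → M) : ∑ x, f x = f 0 + ∑ u : Kˣ, f u := by
  rw [Fintype.sum_eq_add_sum_compl 0]
  congr 1
  refine Finset.sum_bij' (fun x hx => Units.mk0 x (by simpa using hx)) (fun u _ => u)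
    (by simp) (by simp) (by simp) (by simp) (by simp)

theorem natCard_units_mul_eq {K : Type*} [Field K] [Fintype K] [DecidableEq K] (x y : K) :
    Nat.card {u : Kˣ // (u : K) * y = x} =
      if y = 0 then (if x = 0 then Fintype.card K - 1 else 0) else (if x = 0 then 0 else 1) := by
  by_cases hy : y = 0
  · subst hy
    by_cases hx : x = 0
    · simp [hx, Nat.card_eq_fintype_card, Fintype.card_units]
    · rw [if_pos rfl, if_neg hx]
      simp [Ne.symm hx]
  · by_cases hx : x = 0
    · simp [hx, hy]
    · rw [if_neg hy, if_neg hx, Nat.card_eq_one_iff_exists]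
      refine ⟨⟨Units.mk0 (x / y) (div_ne_zero hx hy), div_mul_cancel₀ x hy⟩, ?_⟩
      rintro ⟨u, hu⟩
      ext
      simp [← hu, hy]

theorem natCard_units_add_mul_eq_add_mul {K : Type*} [Field K] [Fintype K] [DecidableEq K]
    (a b a' b' : K) : Nat.card {u : Kˣ // a + u * b = a' + u * b'} =
      if b = b' then (if a = a' then Fintype.card K - 1 else 0) else (if a = a' then 0 else 1) := by
  have key (u : Kˣ) : a + u * b = a' + u * b' ↔ (u : K) * (b - b') = a' - a := by
    constructor <;> intro h <;> linear_combination h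
  simp only [key, natCard_units_mul_eq, sub_eq_zero, eq_comm]

section Cyclotomic

variable {F : Type*} [Field F] (Γ : Subgroup Fˣ)

noncomputable def cyclotomicNumber (u : Fˣ) (v : F) : ℕ :=
  Nat.card {ab : Γ × Γ // ((ab.1 : Fˣ) : F) + u * ((ab.2 : Fˣ) : F) = v}

theorem cyclotomicNumber_eq_natCard (u : Fˣ) (v : F) :
    cyclotomicNumber Γ u v = Nat.card {ab : Fˣ × Fˣ //
      ab.1 ∈ Γ ∧ ab.2 ∈ Γ ∧ (ab.1 : F) + u * (ab.2 : F) = v} :=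
  Nat.card_congr
    { toFun := fun x => ⟨(x.1.1, x.1.2), x.1.1.2, x.1.2.2, x.2⟩
      invFun := fun y => ⟨(⟨y.1.1, y.2.1⟩, ⟨y.1.2, y.2.2.1⟩), y.2.2.2⟩
      left_inv := fun _ => rfl
      right_inv := fun _ => rfl }

variable {Γ}

theorem cyclotomicNumber_mul_mul {γ δ : Fˣ} (hγ : γ ∈ Γ) (hδ : δ ∈ Γ) (u : Fˣ) (v : F) :
    cyclotomicNumber Γ (u * γ) (v * δ) = cyclotomicNumber Γ u v := by
  let γ' : Γ := ⟨γ, hγ⟩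
  let δ' : Γ := ⟨δ, hδ⟩
  refine Nat.card_congr ((Equiv.prodCongr (Equiv.mulRight δ'⁻¹)
    (Equiv.mulLeft γ' * Equiv.mulRight δ'⁻¹)).subtypeEquiv fun ab => ?_)
  have hδ0 : (δ : F) ≠ 0 := δ.ne_zero
  simp only [Equiv.prodCongr_apply, Prod.map, Equiv.coe_mulRight, Equiv.Perm.coe_mul,
    Function.comp_apply, Equiv.coe_mulLeft, Subgroup.coe_mul, Subgroup.coe_inv, Units.val_mul,
    Units.val_inv_eq_inv_val, γ', δ']
  rw [← mul_inv_eq_iff_eq_mul₀ hδ0]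
  constructor <;> intro h <;> rw [← h] <;> ring

theorem cyclotomicNumber_zero [DecidablePred (· ∈ Γ)] (u : Fˣ) :
    cyclotomicNumber Γ u 0 = if -u ∈ Γ then Nat.card Γ else 0 := by
  have hsol : ∀ a b : Fˣ, (a : F) + u * b = 0 ↔ a = -u * b := by
    intro a b
    rw [Units.ext_iff, Units.val_mul, Units.val_neg, neg_mul, eq_neg_iff_add_eq_zero]
  unfold cyclotomicNumber
  simp only [hsol]
  split_ifs with hu
  · exact Nat.card_congr
      { toFun := fun ab => ab.1.2
        invFun := fun b => ⟨(⟨-u * b, mul_mem hu b.2⟩, b), rfl⟩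
        left_inv := fun ⟨_, h⟩ => Subtype.ext (Prod.ext (Subtype.ext h.symm) rfl)
        right_inv := fun _ => rfl }
  · refine Nat.card_eq_zero.mpr (.inl ⟨fun ⟨ab, h⟩ => hu ?_⟩)
    rw [eq_mul_inv_of_mul_eq h.symm]
    exact mul_mem ab.1.2 (inv_mem ab.2.2)

variable [Fintype F] [DecidableEq F]

theorem sum_sq_cyclotomicNumber_zero :
    ∑ u : Fˣ, cyclotomicNumber Γ u 0 ^ 2 = Nat.card Γ ^ 3 := by
  classical
  rw [← Equiv.sum_comp (Equiv.neg Fˣ)]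
  simp only [cyclotomicNumber_zero, Equiv.neg_apply, neg_neg, ite_pow, zero_pow two_ne_zero,
    sum_ite, sum_const_zero, add_zero, sum_const, smul_eq_mul, ← Fintype.card_subtype,
    ← Nat.card_eq_fintype_card]
  ring

theorem sum_sum_cyclotomicNumber_sq_field :
    ∑ u : Fˣ, ∑ v : F, cyclotomicNumber Γ u v ^ 2 =
      Nat.card Γ ^ 2 * (Fintype.card F - 1) + (Nat.card Γ * (Nat.card Γ - 1)) ^ 2 := by
  classical
  simp only [cyclotomicNumber, sum_natCard_fiber_sq]
  rw [sum_natCard_subtype_comm]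
  simp only [natCard_units_add_mul_eq_add_mul, Units.val_inj, SetLike.coe_eq_coe]
  rw [← Equiv.sum_comp (Equiv.prodProdProdComm Γ Γ Γ Γ), Fintype.sum_prod_type]
  simp only [Equiv.prodProdProdComm_apply, sum_prod_ite_fst_eq_snd, smul_eq_mul, mul_ite,
    mul_zero, mul_one, ite_add_ite, add_zero, zero_add, ← Nat.card_eq_fintype_card]
  ring

theorem sum_sum_cyclotomicNumber_sq_add_card_pow_three :
    ∑ u : Fˣ, ∑ v : Fˣ, cyclotomicNumber Γ u v ^ 2 + Nat.card Γ ^ 3 =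
      Nat.card Γ ^ 2 * (Fintype.card F - 1) + (Nat.card Γ * (Nat.card Γ - 1)) ^ 2 := by
  rw [← sum_sum_cyclotomicNumber_sq_field, ← sum_sq_cyclotomicNumber_zero, ← sum_add_distrib]
  exact sum_congr rfl fun u _ => by
    rw [Fintype.sum_eq_add_sum_units fun v => cyclotomicNumber Γ u v ^ 2, add_comm]

theorem sum_sum_cyclotomicNumber_sq_eq_card_sq_mul {g : Fˣ} (hg : ∀ x, x ∈ zpowers g) {d : ℕ}
    (hd : d ∣ Nat.card Fˣ) :
    ∑ u : Fˣ, ∑ v : Fˣ, cyclotomicNumber (zpowers (g ^ d)) u v ^ 2 =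
      Nat.card (zpowers (g ^ d)) ^ 2 * ∑ m ∈ range d, ∑ n ∈ range d,
        cyclotomicNumber (zpowers (g ^ d)) (g ^ m) ((g ^ n : Fˣ) : F) ^ 2 := by
  have hu (u : Fˣ) : ∑ v : Fˣ, cyclotomicNumber (zpowers (g ^ d)) u v ^ 2 =
      Nat.card (zpowers (g ^ d)) •
        ∑ n ∈ range d, cyclotomicNumber (zpowers (g ^ d)) u ↑(g ^ n) ^ 2 :=
    sum_eq_card_zpowers_pow_smul_sum_range hg hd _ fun v h hh => by
      simpa using cyclotomicNumber_mul_mul (one_mem _) hh u v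
  rw [sum_congr rfl fun u _ => hu u, ← smul_sum,
    sum_eq_card_zpowers_pow_smul_sum_range hg hd _ fun u h hh => sum_congr rfl fun n _ => by
      simpa using cyclotomicNumber_mul_mul hh (one_mem _) u _,
    smul_smul, smul_eq_mul, sq]

theorem sum_range_sum_range_cyclotomicNumber_sq_add_card {g : Fˣ} (hg : ∀ x, x ∈ zpowers g)
    {d : ℕ} (hd : d ∣ Nat.card Fˣ) :
    ∑ m ∈ range d, ∑ n ∈ range d,
        cyclotomicNumber (zpowers (g ^ d)) (g ^ m) ((g ^ n : Fˣ) : F) ^ 2 +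
      Nat.card (zpowers (g ^ d)) = Nat.card Fˣ + (Nat.card (zpowers (g ^ d)) - 1) ^ 2 := by
  have hmoment := sum_sum_cyclotomicNumber_sq_add_card_pow_three (Γ := zpowers (g ^ d))
  rw [sum_sum_cyclotomicNumber_sq_eq_card_sq_mul hg hd, ← Fintype.card_units,
    ← Nat.card_eq_fintype_card] at hmoment
  refine Nat.eq_of_mul_eq_mul_left (pow_pos (Nat.card_pos (α := zpowers (g ^ d))) 2) ?_
  calc _ = _ := by ring
    _ = _ := hmoment
    _ = _ := by ring

end Cyclotomic

theorem sum_c_sq_general (p d : ℕ) (hp : p.Prime)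
    (hdvd : d ∣ p - 1)
    (g : (ZMod p)ˣ) (hg : ∀ x : (ZMod p)ˣ, x ∈ Subgroup.zpowers g)
    (c : ℕ → ℕ → ℕ)
    (hc : ∀ m n : ℕ, c m n =
      Nat.card {ab : (ZMod p)ˣ × (ZMod p)ˣ //
        ab.1 ∈ Subgroup.zpowers (g ^ d) ∧ ab.2 ∈ Subgroup.zpowers (g ^ d) ∧
        (ab.1 : ZMod p) + ((g ^ m : (ZMod p)ˣ) : ZMod p) * (ab.2 : ZMod p)
          = ((g ^ n : (ZMod p)ˣ) : ZMod p)}) :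
    ∑ m ∈ Finset.range d, ∑ n ∈ Finset.range d, (c m n : ℝ) ^ 2
      = ((p : ℝ) ^ 2 + ((d : ℝ) ^ 2 - 3 * d - 2) * p + 3 * d + 1) / (d : ℝ) ^ 2 := by
  have := Fact.mk hp
  have hcard : Nat.card (ZMod p)ˣ = p - 1 := by rw [Nat.card_eq_fintype_card, ZMod.card_units]
  have hsum := sum_range_sum_range_cyclotomicNumber_sq_add_card hg (hcard ▸ hdvd)
  have htd := card_zpowers_pow_mul hg (hcard ▸ hdvd)
  set t := Nat.card (zpowers (g ^ d))
  have ht : 1 ≤ t := Nat.card_pos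
  have hd : d ≠ 0 := by rintro rfl; have := hp.two_le; omega
  have hp' : (p : ℝ) = t * d + 1 := by
    rw [← Nat.cast_mul, htd, hcard, Nat.cast_sub hp.one_le, Nat.cast_one, sub_add_cancel]
  have hsumR := congrArg (Nat.cast : ℕ → ℝ) hsum
  simp only [hc, ← cyclotomicNumber_eq_natCard]
  push_cast [Nat.cast_sub ht, ← htd] at hsumR ⊢
  rw [hp', eq_div_iff (pow_ne_zero 2 (Nat.cast_ne_zero.mpr hd))]
  linear_combination (d : ℝ) ^ 2 * hsumR

/-- For `d > 2` dividing `p-1`,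
`∑_{m=0}^{d-1} ∑_{n=0}^{d-1} c_{0,m,n}² = (p² + (d² - 3d - 2)p + 3d + 1)/d²`. -/
theorem sum_c_sq (p d : ℕ) (hp : p.Prime) (hodd : Odd p)
    (hd : 2 < d) (hdvd : d ∣ p - 1)
    (g : (ZMod p)ˣ) (hg : ∀ x : (ZMod p)ˣ, x ∈ Subgroup.zpowers g)
    (c : ℕ → ℕ → ℕ)
    (hc : ∀ m n : ℕ, c m n =
      Nat.card {ab : (ZMod p)ˣ × (ZMod p)ˣ //
        ab.1 ∈ Subgroup.zpowers (g ^ d) ∧ ab.2 ∈ Subgroup.zpowers (g ^ d) ∧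
        (ab.1 : ZMod p) + ((g ^ m : (ZMod p)ˣ) : ZMod p) * (ab.2 : ZMod p)
          = ((g ^ n : (ZMod p)ˣ) : ZMod p)}) :
    ∑ m ∈ Finset.range d, ∑ n ∈ Finset.range d, (c m n : ℝ) ^ 2
      = ((p : ℝ) ^ 2 + ((d : ℝ) ^ 2 - 3 * d - 2) * p + 3 * d + 1) / (d : ℝ) ^ 2 :=
  sum_c_sq_general p d hp hdvd g hg c hc
end
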